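/- arXiv:0710.0268 — 6 statements merged into one kernel-verified Lean document; each statement's English description precedes it below -/
import Mathlib

section
/- Let {p_n}_{n\geq 0} be a polynomial sequence of binomial type. Then for each n \geq 0, the polynomial p_{n+1}(x) is divisible by x; defining p^*_n(x) = p_{n+1}(x)/x, the sequence satisfies p^*_n(x+y) = \sum_{k=0}^{n} \binom{n}{k} p_k(x) p^*_{n-k}(y) for all n \geq 0. -/
/-!
Work pointwise with the exponential generating functions `E_x(t) = ∑ pₙ(x) tⁿ/n!` and
`Q_x(t) = ∑ p*ₙ(x) tⁿ/n!` in `F⟦t⟧`. Binomial type says `E_{x+y} = E_x E_y`. As `p₀ ≠ 0`,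
`E_0 ≠ 0` (else `E_x = E_x E_0 = 0`), so the idempotent `E_0` is `1`, which gives `pₙ₊₁(0) = 0`.
Since `pₙ₊₁ = x p*ₙ`, `d/dt E_x = x Q_x`, so differentiating `E_{x+y} = E_x E_y` in `t` yields
`(x+y) Q_{x+y} = x Q_x E_y + y E_x Q_y`. Multiplying by `E_{-x-y} = E_{-x} E_{-y}` shows that
`z ↦ z W_z` is additive for `W_z = Q_z E_{-z}`. Its coefficients are polynomials in `z`, and an
additive polynomial in characteristic zero is linear, so `W_z = W` is constant. Hence
`Q_{x+y} = W E_x E_y = E_x Q_y`, which is the claim coefficientwise.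
-/

open Polynomial Finset Nat

section ExponentialGeneratingFunction

variable {F : Type*} [Field F]

noncomputable def egf (a : ℕ → F) : PowerSeries F :=
  PowerSeries.mk fun n => a n / n !

def binomialConv {R : Type*} [CommSemiring R] (a b : ℕ → R) (n : ℕ) : R :=
  ∑ k ∈ range (n + 1), (n.choose k : R) * a k * b (n - k)

@[simp]
theorem coeff_egf (a : ℕ → F) (n : ℕ) : PowerSeries.coeff n (egf a) = a n / n ! :=
  PowerSeries.coeff_mk _ _

theorem egf_injective [CharZero F] : Function.Injective (egf : (ℕ → F) → PowerSeries F) := by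
  intro a b h
  funext n
  simpa [Nat.factorial_ne_zero] using congrArg (PowerSeries.coeff n) h

theorem egf_mul [CharZero F] (a b : ℕ → F) : egf a * egf b = egf (binomialConv a b) := by
  ext n
  rw [PowerSeries.coeff_mul, Finset.Nat.sum_antidiagonal_eq_sum_range_succ_mk, coeff_egf,
    binomialConv, Finset.sum_div]
  refine Finset.sum_congr rfl fun k hk => ?_
  have hkn : k ≤ n := Nat.lt_succ_iff.mp (Finset.mem_range.mp hk)
  have hn : (n ! : F) ≠ 0 := Nat.cast_ne_zero.mpr n.factorial_ne_zero
  rw [coeff_egf, coeff_egf, Nat.cast_choose F hkn]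
  field_simp

theorem egf_add (a b : ℕ → F) : egf a + egf b = egf (a + b) := by
  ext n
  simp [add_div]

theorem C_mul_egf (c : F) (a : ℕ → F) : PowerSeries.C c * egf a = egf fun n => c * a n := by
  ext n
  simp [mul_div_assoc]

theorem derivative_egf [CharZero F] (a : ℕ → F) :
    PowerSeries.derivative F (egf a) = egf fun n => a (n + 1) := by
  ext n
  rw [PowerSeries.coeff_derivative, coeff_egf, coeff_egf, Nat.factorial_succ, Nat.cast_mul]
  field_simp
  push_cast
  ring

end ExponentialGeneratingFunction

theorem eq_C_mul_X_of_eval_add {F : Type*} [Field F] [CharZero F] {g : F[X]}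
    (hg : ∀ x y, g.eval (x + y) = g.eval x + g.eval y) : g = C (g.eval 1) * X := by
  have hnat : ∀ n : ℕ, g.eval (n : F) = n * g.eval 1 := by
    intro n
    induction n with
    | zero => simpa using hg 0 0
    | succ n ih => push_cast; rw [hg, ih]; ring
  refine Polynomial.eq_of_infinite_eval_eq _ _ ((Set.infinite_range_of_injective
    Nat.cast_injective).mono ?_)
  rintro _ ⟨n, rfl⟩
  simp only [Set.mem_ofPred_eq, eval_mul, eval_C, eval_X, hnat]
  ring

theorem exists_eq_C_of_mul_eval_add {F : Type*} [Field F] [CharZero F] {w : F[X]}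
    (hw : ∀ x y, (x + y) * w.eval (x + y) = x * w.eval x + y * w.eval y) : ∃ c, w = C c := by
  have hX := eq_C_mul_X_of_eval_add (g := X * w) (by simpa using hw)
  rw [eval_mul, eval_X, one_mul] at hX
  exact ⟨w.eval 1, mul_left_cancel₀ X_ne_zero (hX.trans (mul_comm _ _))⟩

section SeriesFamily
variable {R : Type*} [CommRing R] {E Q : R → PowerSeries R}

theorem C_add_mul_eq_of_derivative (hadd : ∀ x y, E (x + y) = E x * E y)
    (hder : ∀ x, PowerSeries.derivative R (E x) = PowerSeries.C x * Q x) (x y : R) :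
    PowerSeries.C (x + y) * Q (x + y) =
      PowerSeries.C x * Q x * E y + PowerSeries.C y * E x * Q y := by
  have h := congrArg (PowerSeries.derivative R) (hadd x y)
  rw [Derivation.leibniz, hder, hder, hder, smul_eq_mul, smul_eq_mul] at h
  linear_combination h

theorem C_add_mul_mul_neg_eq (hadd : ∀ x y, E (x + y) = E x * E y) (hE0 : E 0 = 1)
    (hder : ∀ x, PowerSeries.derivative R (E x) = PowerSeries.C x * Q x) (x y : R) :
    PowerSeries.C (x + y) * (Q (x + y) * E (-(x + y))) =
      PowerSeries.C x * (Q x * E (-x)) + PowerSeries.C y * (Q y * E (-y)) := by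
  have hinv : ∀ z, E z * E (-z) = 1 := fun z => by rw [← hadd, add_neg_cancel, hE0]
  rw [neg_add, hadd]
  linear_combination (E (-x) * E (-y)) * C_add_mul_eq_of_derivative hadd hder x y
    + PowerSeries.C x * Q x * E (-x) * hinv y + PowerSeries.C y * Q y * E (-y) * hinv x

end SeriesFamily

section BinomialType
variable {F : Type*} [Field F]

noncomputable def evalEgf (u : ℕ → F[X]) (x : F) : PowerSeries F :=
  egf fun n => (u n).eval x

theorem evalEgf_mul [CharZero F] (u v : ℕ → F[X]) (x : F) :
    evalEgf u x * evalEgf v x = evalEgf (binomialConv u v) x := by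
  rw [evalEgf, evalEgf, evalEgf, egf_mul]
  congr 1
  funext n
  simp [binomialConv, eval_finsetSum]

theorem evalEgf_neg (u : ℕ → F[X]) (x : F) :
    evalEgf u (-x) = evalEgf (fun n => (u n).comp (-X)) x := by
  simp [evalEgf]

theorem evalEgf_add [CharZero F] {p : ℕ → F[X]}
    (hbin : ∀ (n : ℕ) (x y : F), (p n).eval (x + y) =
      ∑ k ∈ range (n + 1), (n.choose k : F) * (p k).eval x * (p (n - k)).eval y) (x y : F) :
    evalEgf p (x + y) = evalEgf p x * evalEgf p y := by
  rw [evalEgf, evalEgf, evalEgf, egf_mul]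
  exact congrArg egf (funext fun n => hbin n x y)

theorem evalEgf_zero_eq_one [Infinite F] {p : ℕ → F[X]} (h0 : p 0 ≠ 0)
    (hadd : ∀ x y, evalEgf p (x + y) = evalEgf p x * evalEgf p y) : evalEgf p 0 = 1 := by
  have hne : evalEgf p 0 ≠ 0 := by
    intro h
    refine h0 (Polynomial.funext fun x => ?_)
    have hx := hadd x 0
    rw [add_zero, h, mul_zero] at hx
    simpa [evalEgf] using congrArg (PowerSeries.coeff 0) hx
  have hidem : IsIdempotentElem (evalEgf p 0) := by
    rw [IsIdempotentElem, ← hadd, add_zero]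
  exact (IsIdempotentElem.iff_eq_zero_or_one.mp hidem).resolve_left hne

theorem eval_zero_succ_of_evalEgf_zero_eq_one [CharZero F] {p : ℕ → F[X]}
    (hE0 : evalEgf p 0 = 1) (n : ℕ) : (p (n + 1)).eval 0 = 0 := by
  simpa [evalEgf, Nat.factorial_ne_zero] using congrArg (PowerSeries.coeff (n + 1)) hE0

theorem derivative_evalEgf [CharZero F] {p q : ℕ → F[X]} (hq : ∀ n, p (n + 1) = X * q n)
    (x : F) : PowerSeries.derivative F (evalEgf p x) = PowerSeries.C x * evalEgf q x := by
  simp [evalEgf, derivative_egf, C_mul_egf, hq]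

theorem evalEgf_eq_evalEgf_zero [CharZero F] {w : ℕ → F[X]}
    (hw : ∀ x y, PowerSeries.C (x + y) * evalEgf w (x + y) =
      PowerSeries.C x * evalEgf w x + PowerSeries.C y * evalEgf w y) (x : F) :
    evalEgf w x = evalEgf w 0 := by
  have hcoeff : ∀ n x y, (x + y) * (w n).eval (x + y) = x * (w n).eval x + y * (w n).eval y := by
    intro n x y
    have h := hw x y
    simp only [evalEgf, C_mul_egf, egf_add] at h
    exact congrFun (egf_injective h) n
  refine congrArg egf (funext fun n => ?_)
  obtain ⟨c, hc⟩ := exists_eq_C_of_mul_eval_add (hcoeff n)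
  simp [hc]

theorem evalEgf_add_of_eq_X_mul [CharZero F] {p q : ℕ → F[X]}
    (hadd : ∀ x y, evalEgf p (x + y) = evalEgf p x * evalEgf p y) (hE0 : evalEgf p 0 = 1)
    (hq : ∀ n, p (n + 1) = X * q n) (x y : F) :
    evalEgf q (x + y) = evalEgf p x * evalEgf q y := by
  set w := binomialConv q fun n => (p n).comp (-X)
  have hw : ∀ z, evalEgf q z * evalEgf p (-z) = evalEgf w z := fun z => by
    rw [evalEgf_neg, evalEgf_mul]
  have hconst : ∀ z, evalEgf w z = evalEgf w 0 := evalEgf_eq_evalEgf_zero fun x y => by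
    simpa only [hw] using C_add_mul_mul_neg_eq hadd hE0 (derivative_evalEgf hq) x y
  have hq_eq : ∀ z, evalEgf q z = evalEgf w 0 * evalEgf p z := fun z => by
    rw [← hconst z, ← hw, mul_assoc, ← hadd, neg_add_cancel, hE0, mul_one]
  rw [hq_eq, hq_eq, hadd]
  ring

end BinomialType

theorem binomial_type_pstar {F : Type*} [Field F] [CharZero F] (p : ℕ → Polynomial F)
    (hdeg : ∀ n, (p n).degree = n)
    (hbin : ∀ (n : ℕ) (x y : F), (p n).eval (x + y) =
      ∑ k ∈ Finset.range (n + 1), (n.choose k : F) * (p k).eval x * (p (n - k)).eval y) :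
    (∀ n : ℕ, Polynomial.X ∣ p (n + 1)) ∧
      ∀ q : ℕ → Polynomial F, (∀ n : ℕ, p (n + 1) = Polynomial.X * q n) →
        ∀ (n : ℕ) (x y : F), (q n).eval (x + y) =
          ∑ k ∈ Finset.range (n + 1),
            (n.choose k : F) * (p k).eval x * (q (n - k)).eval y := by
  have hadd := evalEgf_add hbin
  have hE0 : evalEgf p 0 = 1 := evalEgf_zero_eq_one (fun h => by simpa [h] using hdeg 0) hadd
  refine ⟨fun n => X_dvd_iff.mpr ?_, fun q hq n x y => ?_⟩
  · rw [coeff_zero_eq_eval_zero]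
    exact eval_zero_succ_of_evalEgf_zero_eq_one hE0 n
  · have h := evalEgf_add_of_eq_X_mul hadd hE0 hq x y
    rw [evalEgf, evalEgf, evalEgf, egf_mul] at h
    exact congrFun (egf_injective h) n
end

section
/- Let p^*_0, ..., p^*_{N-M-1} be monic polynomials with deg p^*_k = k, N > M. For x_1,...,x_M, y_1,...,y_N in a field with all x_i + y_j nonzero, the N \times N determinant whose first N-M rows are (p^*_{N-M-i}(y_j))_j (for i = 1,...,N-M) and whose last M rows are (1/(x_i + y_j))_j (for i = 1,...,M) equals \prod_{i<j \leq M}(x_i - x_j) \cdot \prod_{i<j \leq N}(y_i - y_j) / \prod_{1\leq i \leq M, 1 \leq j \leq N}(x_i + y_j). -/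
/-!
Multiplying column `j` by `∏ᵢ (xᵢ + yⱼ)` turns every row into the values at `y₁, …, y_N` of a
polynomial of degree `< N`: `p*_{N-M-i} · ∏ᵢ (X + xᵢ)` in the top rows, the Lagrange numerators
`∏_{i ≠ a} (X + xᵢ)` in the bottom ones. The resulting matrix is the coefficient matrix of these
polynomials times a Vandermonde matrix in `y`. The coefficient matrix is block upper triangular
with a unitriangular first block, because the top polynomials are monic of degrees
`N - 1, …, M` and the bottom ones have degree `M - 1`. The determinant of its last block is
`∏_{a<b} (xₐ - x_b)`: evaluating the Lagrange numerators at the nodes `-x_b` gives a diagonal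
matrix.
-/

open Finset Polynomial Matrix Lagrange

theorem Finset.prod_erase_eq_prod_Ioi_mul_prod_Ioi {ι β : Type*} [Fintype ι] [LinearOrder ι]
    [LocallyFiniteOrderTop ι] [LocallyFiniteOrderBot ι] [CommMonoid β] (g : ι → ι → β) :
    ∏ a, ∏ b ∈ univ.erase a, g a b = (∏ a, ∏ b ∈ Ioi a, g a b) * ∏ a, ∏ b ∈ Ioi a, g b a := by
  have hsplit : ∀ a : ι, univ.erase a = Ioi a ∪ Iio a := fun a => by
    ext b
    simp [ne_comm]
  have hswap : ∏ a, ∏ b ∈ Iio a, g a b = ∏ b, ∏ a ∈ Ioi b, g a b :=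
    prod_comm' fun a b => by simp
  simp_rw [hsplit, prod_union (disjoint_left.2 fun _ h h' =>
    lt_asymm (mem_Ioi.1 h) (mem_Iio.1 h'))]
  rw [prod_mul_distrib, hswap]

namespace Lagrange

theorem nodal_erase_eq_of_eq {R ι : Type*} [CommRing R] [IsDomain R] [DecidableEq ι]
    {s : Finset ι} {v : ι → R} {a b : ι} (ha : a ∈ s) (hb : b ∈ s) (hab : v a = v b) :
    nodal (s.erase a) v = nodal (s.erase b) v :=
  mul_left_cancel₀ (X_sub_C_ne_zero (v a)) <| by
    rw [← nodal_eq_mul_nodal_erase ha, hab, ← nodal_eq_mul_nodal_erase hb]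

theorem eval_nodal_erase {F ι : Type*} [Field F] [DecidableEq ι] {s : Finset ι} {v : ι → F}
    {i : ι} (hi : i ∈ s) {z : F} (hz : z - v i ≠ 0) :
    (nodal (s.erase i) v).eval z = (z - v i)⁻¹ * (nodal s v).eval z := by
  rw [nodal_eq_mul_nodal_erase hi, eval_mul, eval_sub, eval_X, eval_C, inv_mul_cancel_left₀ hz]

end Lagrange

namespace Matrix

variable {R : Type*} [CommRing R]

theorem det_eval_eq_det_coeff_rev_mul {n : ℕ} (f : Fin n → R[X])
    (hf : ∀ i, (f i).natDegree < n) (y : Fin n → R) :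
    (of fun i j => (f i).eval (y j)).det =
      (of fun i k : Fin n => (f i).coeff k.rev).det * ∏ i, ∏ j ∈ Ioi i, (y i - y j) := by
  have hfactor : (of fun i j => (f i).eval (y j)) =
      (of fun i k : Fin n => (f i).coeff k.rev) * (projVandermonde 1 y)ᵀ := by
    ext i j
    simp only [of_apply, mul_apply, transpose_apply, projVandermonde_apply, Pi.one_apply, one_pow,
      one_mul]
    rw [Fintype.sum_equiv Fin.revPerm _ (fun k : Fin n => (f i).coeff k * y j ^ (k : ℕ))
      (fun _ => by simp), Fin.sum_univ_eq_sum_range (fun k => (f i).coeff k * y j ^ k),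
      eval_eq_sum_range' (hf i)]
  rw [hfactor, det_mul, det_transpose, det_projVandermonde]
  simp

theorem det_coeff_rev_eq_of_monic_head {k m n : ℕ} (hn : k + m = n) (f : Fin n → R[X])
    (hmonic : ∀ i : Fin n, (i : ℕ) < k → (f i).Monic)
    (hdeg : ∀ i : Fin n, (i : ℕ) < k → (f i).natDegree = n - 1 - i)
    (hdeg_tail : ∀ i : Fin n, k ≤ (i : ℕ) → (f i).natDegree < m) :
    (of fun i j : Fin n => (f i).coeff j.rev).det =
      (of fun a b : Fin m => (f (Fin.cast hn (Fin.natAdd k a))).coeff b.rev).det := by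
  set C : Matrix (Fin n) (Fin n) R := of fun i j => (f i).coeff j.rev
  let e : Fin k ⊕ Fin m ≃ Fin n := finSumFinEquiv.trans (finCongr hn)
  have he_inl : ∀ a, (e (.inl a) : ℕ) = a := fun _ => rfl
  have he_inr : ∀ b, (e (.inr b) : ℕ) = k + b := fun _ => rfl
  have hzero : (C.submatrix e e).toBlocks₂₁ = 0 := by
    ext a b
    refine coeff_eq_zero_of_natDegree_lt ((hdeg_tail _ (by rw [he_inr]; omega)).trans_le ?_)
    rw [Fin.val_rev, he_inl]
    omega
  have hunitriangular : (C.submatrix e e).toBlocks₁₁.det = 1 := by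
    rw [det_of_isUpperTriangular]
    · refine prod_eq_one fun a _ => ?_
      have hlead := (hmonic (e (.inl a)) (by rw [he_inl]; omega)).coeff_natDegree
      rwa [hdeg _ (by rw [he_inl]; omega), he_inl, Nat.sub_sub, add_comm 1] at hlead
    · intro a b (hba : b < a)
      refine coeff_eq_zero_of_natDegree_lt ?_
      rw [hdeg _ (by rw [he_inl]; omega), Fin.val_rev, he_inl, he_inl]
      omega
  rw [← det_submatrix_equiv_self e, ← fromBlocks_toBlocks (C.submatrix e e), hzero,
    det_fromBlocks_zero₂₁, hunitriangular, one_mul]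
  congr 1
  ext a b
  simp only [C, toBlocks₂₂, submatrix_apply, of_apply, Fin.val_rev, he_inr]
  congr 1
  omega

end Matrix

theorem Lagrange.det_coeff_rev_nodal_erase {R : Type*} [CommRing R] [IsDomain R] {m : ℕ}
    (v : Fin m → R) :
    (of fun a b : Fin m => (nodal (univ.erase a) v).coeff b.rev).det = (vandermonde v).det := by
  by_cases hv : Function.Injective v
  · have hdiag : (of fun a b => (nodal (univ.erase a) v).eval (v b)) =
        diagonal fun a => ∏ b ∈ univ.erase a, (v a - v b) := by
      ext a b
      rcases eq_or_ne a b with rfl | hab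
      · simp [eval_nodal]
      · simp [diagonal_apply_ne _ hab, eval_nodal_at_node (mem_erase.2 ⟨hab.symm, mem_univ b⟩)]
    have key := det_eval_eq_det_coeff_rev_mul (fun a => nodal (univ.erase a) v)
      (fun a => by simp [natDegree_nodal, a.pos]) v
    rw [hdiag, det_diagonal, prod_erase_eq_prod_Ioi_mul_prod_Ioi, mul_comm] at key
    have hne : ∏ a, ∏ b ∈ Ioi a, (v a - v b) ≠ 0 :=
      prod_ne_zero_iff.2 fun a _ => prod_ne_zero_iff.2 fun b hb =>
        sub_ne_zero.2 (hv.ne (mem_Ioi.1 hb).ne)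
    rw [det_vandermonde]
    exact (mul_right_cancel₀ hne key).symm
  · obtain ⟨a, b, hab, hne⟩ := Function.not_injective_iff.1 hv
    rw [det_vandermonde_eq_zero_iff.2 ⟨a, b, hab, hne⟩]
    refine det_zero_of_row_eq hne (funext fun j => ?_)
    simp [nodal_erase_eq_of_eq (mem_univ a) (mem_univ b) hab]

section BorderedCauchy

variable {F : Type*} [Field F] {M N : ℕ} (pstar : ℕ → F[X]) (x : Fin M → F)

/-- Row `i` of the bordered Cauchy matrix after column `j` is multiplied by `∏ₐ (xₐ + yⱼ)`,
as a polynomial in `yⱼ`. -/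
noncomputable def borderedCauchyPoly (i : Fin N) : F[X] :=
  if hi : (i : ℕ) < N - M then pstar (N - M - 1 - i) * nodal univ (-x)
  else nodal (univ.erase ⟨i - (N - M), by have := i.isLt; omega⟩) (-x)

variable {pstar}

theorem monic_borderedCauchyPoly (hmonic : ∀ k, (pstar k).Monic) {i : Fin N}
    (hi : (i : ℕ) < N - M) : (borderedCauchyPoly pstar x i).Monic := by
  rw [borderedCauchyPoly, dif_pos hi]
  exact (hmonic _).mul nodal_monic

theorem natDegree_borderedCauchyPoly_of_lt (hmonic : ∀ k, (pstar k).Monic)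
    (hdeg : ∀ k, (pstar k).natDegree = k) {i : Fin N} (hi : (i : ℕ) < N - M) :
    (borderedCauchyPoly pstar x i).natDegree = N - 1 - i := by
  rw [borderedCauchyPoly, dif_pos hi, (hmonic _).natDegree_mul nodal_monic, hdeg,
    natDegree_nodal, card_univ, Fintype.card_fin]
  omega

theorem natDegree_borderedCauchyPoly_of_le {i : Fin N} (hi : N - M ≤ (i : ℕ)) :
    (borderedCauchyPoly pstar x i).natDegree < M := by
  rw [borderedCauchyPoly, dif_neg (not_lt.2 hi), natDegree_nodal,
    card_erase_of_mem (mem_univ _), card_univ, Fintype.card_fin]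
  omega

theorem natDegree_borderedCauchyPoly_lt (hMN : M ≤ N) (hmonic : ∀ k, (pstar k).Monic)
    (hdeg : ∀ k, (pstar k).natDegree = k) (i : Fin N) :
    (borderedCauchyPoly pstar x i).natDegree < N := by
  rcases lt_or_ge (i : ℕ) (N - M) with hi | hi
  · rw [natDegree_borderedCauchyPoly_of_lt x hmonic hdeg hi]
    omega
  · have := natDegree_borderedCauchyPoly_of_le (pstar := pstar) x hi
    omega

theorem det_coeff_rev_borderedCauchyPoly (hMN : M ≤ N) (hmonic : ∀ k, (pstar k).Monic)
    (hdeg : ∀ k, (pstar k).natDegree = k) :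
    (of fun i j : Fin N => (borderedCauchyPoly pstar x i).coeff j.rev).det =
      ∏ a, ∏ b ∈ Ioi a, (x a - x b) := by
  have hNM : N - M + M = N := by omega
  have htail : ∀ a : Fin M,
      borderedCauchyPoly pstar x (Fin.cast hNM (Fin.natAdd (N - M) a)) =
        nodal (univ.erase a) (-x) := by
    intro a
    simp [borderedCauchyPoly]
  rw [det_coeff_rev_eq_of_monic_head hNM _ (fun _ => monic_borderedCauchyPoly x hmonic)
    (fun _ => natDegree_borderedCauchyPoly_of_lt x hmonic hdeg)
    (fun _ => natDegree_borderedCauchyPoly_of_le x)]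
  simp_rw [htail]
  rw [det_coeff_rev_nodal_erase, det_vandermonde]
  simp [neg_add_eq_sub]

end BorderedCauchy

/-- Bordered Cauchy determinant: the `N × N` determinant whose first `N - M` rows are
evaluations of monic polynomials `p*_{N-M-1}, …, p*_0` at `y₁, …, y_N`, and whose last
`M` rows are the Cauchy kernel `1/(xᵢ + yⱼ)`. -/
theorem bordered_cauchy_determinant {F : Type*} [Field F] (M N : ℕ) (hMN : M < N)
    (pstar : ℕ → Polynomial F) (hmonic : ∀ k, (pstar k).Monic)
    (hdeg : ∀ k, (pstar k).natDegree = k)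
    (x : Fin M → F) (y : Fin N → F) (h : ∀ i j, x i + y j ≠ 0) :
    (Matrix.of fun i j : Fin N =>
        if hi : (i : ℕ) < N - M then (pstar (N - M - 1 - (i : ℕ))).eval (y j)
        else (x ⟨(i : ℕ) - (N - M), by have := i.isLt; omega⟩ + y j)⁻¹).det =
      ((∏ i : Fin M, ∏ j ∈ Finset.Ioi i, (x i - x j)) *
          ∏ i : Fin N, ∏ j ∈ Finset.Ioi i, (y i - y j)) /
        ∏ i : Fin M, ∏ j : Fin N, (x i + y j) := by
  have hden_ne : ∏ i, ∏ j, (x i + y j) ≠ 0 :=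
    prod_ne_zero_iff.2 fun i _ => prod_ne_zero_iff.2 fun j _ => h i j
  have hden : ∏ i, ∏ j, (x i + y j) = (diagonal fun j => (nodal univ (-x)).eval (y j)).det := by
    rw [det_diagonal, prod_comm]
    simp [eval_nodal, add_comm]
  rw [eq_div_iff hden_ne, hden, ← det_mul]
  trans (of fun i j => (borderedCauchyPoly pstar x i).eval (y j)).det
  · congr 1
    ext i j
    simp only [mul_diagonal, of_apply, borderedCauchyPoly]
    split_ifs
    · rw [eval_mul]
    · have hnode : ∀ a, y j - (-x) a ≠ 0 := fun a => by simpa [add_comm] using h a j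
      rw [eval_nodal_erase (mem_univ _) (hnode _)]
      simp [add_comm]
  · rw [det_eval_eq_det_coeff_rev_mul _ (natDegree_borderedCauchyPoly_lt x hMN.le hmonic hdeg) y,
      det_coeff_rev_borderedCauchyPoly x hMN.le hmonic hdeg]
end

section
/- More generally, if p_n (n = 0, 1, ..., M+N-1) are any monic polynomials with deg p_n = n, and \tilde{s}_\lambda(x_1,...,x_M) = \det(p_{\lambda_i + M - i}(x_j))_{1\leq i,j\leq M}, then \Delta(y_1,...,y_N)\,\Delta(x_1,...,x_M)\,\prod_{i,j}(y_j - x_i) = \sum_{\lambda} (-1)^{|\lambda|} \tilde{s}_\lambda(x_1,...,x_M)\, \tilde{s}_{\lambda^\dagger}(y_1,...,y_N), where \lambda runs over partitions in the M \times N rectangle, \Delta denotes the difference product, and \lambda^\dagger = (N-\lambda_M, ..., N-\lambda_1)'. -/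
/-!
Put `z = (y, x)` and let `C` be the generalized Vandermonde matrix whose row `r` is
`(p (N + M - 1 - r) (z c))_c`; its determinant is `∏_{a < b} (z a - z b)`, which is the left-hand
side. Expand `det C` along the `N` columns of `y` and the `M` columns of `x` (generalized Laplace
expansion): the terms are indexed by the shuffles of the rows, i.e. by the choice of the `M` rows
taken by `x`. These rows are `N + i - λ i` for a unique partition `λ` in the `M × N` box, and the
complementary rows, taken by `y`, are then `M + j - λ† j`. The two minors are `s̃_λ(x)` and
`s̃_{λ†}(y)`, and the sign of the shuffle is `(-1)^{|λ|}`, because exactly `λ i` of the `y`-rows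
lie below the `i`-th `x`-row.
-/

open Finset Equiv Matrix Polynomial

theorem Fin.prod_prod_Ioi_add {α : Type*} [CommMonoid α] {m n : ℕ}
    (f : Fin (m + n) → Fin (m + n) → α) :
    ∏ a, ∏ b ∈ Ioi a, f a b =
      (∏ i : Fin m, ∏ j ∈ Ioi i, f (castAdd n i) (castAdd n j)) *
        (∏ i : Fin n, ∏ j ∈ Ioi i, f (natAdd m i) (natAdd m j)) *
        ∏ i : Fin m, ∏ j : Fin n, f (castAdd n i) (natAdd m j) := by
  have hcc (i j : Fin m) : castAdd n i < castAdd n j ↔ i < j := Iff.rfl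
  have hcn (i : Fin m) (j : Fin n) : castAdd n i < natAdd m j := by simp [Fin.lt_def]; omega
  have hnc (i : Fin m) (j : Fin n) : ¬ natAdd m j < castAdd n i := by simp [Fin.lt_def]; omega
  simp only [← filter_lt_eq_Ioi, prod_filter, Fin.prod_univ_add, hcc, hcn, hnc,
    natAdd_lt_natAdd_iff, if_true, if_false, prod_const_one, mul_one, prod_mul_distrib]
  ac_rfl

theorem Fin.prod_prod_Ioi_rev {α : Type*} [CommMonoid α] {n : ℕ} (f : Fin n → Fin n → α) :
    ∏ i, ∏ j ∈ Ioi i, f (rev j) (rev i) = ∏ i, ∏ j ∈ Ioi i, f i j := by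
  rw [prod_comm' (t' := univ) (s' := Iio) (by simp)]
  refine Fintype.prod_equiv revPerm _ _ fun j => ?_
  rw [revPerm_apply, ← map_revPerm_Iio, prod_map]
  simp

theorem Fin.prod_prod_Ioi_sub_append {R : Type*} [CommRing R] {m n : ℕ} (x : Fin m → R)
    (y : Fin n → R) :
    ∏ a, ∏ b ∈ Ioi a, (append y x a - append y x b) =
      (∏ i : Fin n, ∏ j ∈ Ioi i, (y i - y j)) * (∏ i : Fin m, ∏ j ∈ Ioi i, (x i - x j)) *
        ∏ i : Fin m, ∏ j : Fin n, (y j - x i) := by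
  rw [prod_prod_Ioi_add, prod_comm (s := univ (α := Fin m))]
  simp

theorem Fin.val_sub_le_val_sub_of_strictMono {m n : ℕ} {f : Fin m → Fin n} (hf : StrictMono f)
    (i j : Fin m) : (j : ℕ) - i ≤ f j - f i := by
  simpa using card_le_card_of_injOn f
    (fun k hk => by simp only [coe_Ico, Set.mem_Ico] at hk ⊢; exact ⟨hf.monotone hk.1, hf hk.2⟩)
    hf.injective.injOn (s := Ico i j) (t := Ico (f i) (f j))

theorem StrictMono.eq_of_comp_perm_eq {α : Type*} [Preorder α] {k : ℕ} {f g : Fin k → α}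
    (hf : StrictMono f) (hg : StrictMono g) {τ τ' : Perm (Fin k)} (h : f ∘ τ = g ∘ τ') :
    f = g := by
  rw [← hf.range_inj hg, ← EquivLike.range_comp f τ, h, EquivLike.range_comp]

theorem det_eval_rev_eq_prod_prod_Ioi {R : Type*} [CommRing R] {n : ℕ} (p : ℕ → R[X])
    (hmonic : ∀ k, (p k).Monic) (hdeg : ∀ k, (p k).natDegree = k) (z : Fin n → R) :
    (of fun r c : Fin n => (p (n - 1 - r)).eval (z c)).det = ∏ a, ∏ b ∈ Ioi a, (z a - z b) := by
  calc _ = (vandermonde (z ∘ Fin.rev)).det := by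
        rw [det_eval_matrixOfPolynomials_eq_det_vandermonde _ (fun k => p k) (fun k => hdeg k)
          (fun k => hmonic k), ← det_transpose, ← det_submatrix_equiv_self Fin.revPerm]
        congr 2
        ext r c
        simp only [Fin.val_rev, transpose_apply, submatrix_apply, of_apply, Fin.revPerm_apply,
          Function.comp_apply]
        rw [show n - 1 - (n - (c + 1)) = c by omega]
    _ = _ := by rw [det_vandermonde]; exact Fin.prod_prod_Ioi_rev fun a b => z a - z b

namespace Equiv.Perm

variable {m n : ℕ}

def IsShuffle (ρ : Perm (Fin (m + n))) : Prop :=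
  StrictMono (ρ ∘ Fin.castAdd n) ∧ StrictMono (ρ ∘ Fin.natAdd m)

def finSumCongr (τ₁ : Perm (Fin m)) (τ₂ : Perm (Fin n)) : Perm (Fin (m + n)) :=
  finSumFinEquiv.permCongr (τ₁.sumCongr τ₂)

@[simp]
theorem finSumCongr_castAdd (τ₁ : Perm (Fin m)) (τ₂ : Perm (Fin n)) (i : Fin m) :
    finSumCongr τ₁ τ₂ (Fin.castAdd n i) = Fin.castAdd n (τ₁ i) := by
  simp [finSumCongr, permCongr_apply]

@[simp]
theorem finSumCongr_natAdd (τ₁ : Perm (Fin m)) (τ₂ : Perm (Fin n)) (j : Fin n) :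
    finSumCongr τ₁ τ₂ (Fin.natAdd m j) = Fin.natAdd m (τ₂ j) := by
  simp [finSumCongr, permCongr_apply]

@[simp]
theorem sign_finSumCongr (τ₁ : Perm (Fin m)) (τ₂ : Perm (Fin n)) :
    sign (finSumCongr τ₁ τ₂) = sign τ₁ * sign τ₂ := by
  rw [finSumCongr, sign_permCongr, sign_sumCongr]

theorem mul_finSumCongr_comp_castAdd (ρ : Perm (Fin (m + n))) (τ₁ : Perm (Fin m))
    (τ₂ : Perm (Fin n)) : ⇑(ρ * finSumCongr τ₁ τ₂) ∘ Fin.castAdd n = (ρ ∘ Fin.castAdd n) ∘ τ₁ := by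
  ext; simp

theorem mul_finSumCongr_comp_natAdd (ρ : Perm (Fin (m + n))) (τ₁ : Perm (Fin m))
    (τ₂ : Perm (Fin n)) : ⇑(ρ * finSumCongr τ₁ τ₂) ∘ Fin.natAdd m = (ρ ∘ Fin.natAdd m) ∘ τ₂ := by
  ext; simp

theorem IsShuffle.eq_of_mul_finSumCongr_eq {ρ ρ' : Perm (Fin (m + n))} (hρ : IsShuffle ρ)
    (hρ' : IsShuffle ρ') {τ₁ τ₁' : Perm (Fin m)} {τ₂ τ₂' : Perm (Fin n)}
    (h : ρ * finSumCongr τ₁ τ₂ = ρ' * finSumCongr τ₁' τ₂') :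
    ρ = ρ' ∧ τ₁ = τ₁' ∧ τ₂ = τ₂' := by
  have hcast : (ρ ∘ Fin.castAdd n) ∘ τ₁ = (ρ' ∘ Fin.castAdd n) ∘ τ₁' := by
    rw [← mul_finSumCongr_comp_castAdd, h, mul_finSumCongr_comp_castAdd]
  have hnat : (ρ ∘ Fin.natAdd m) ∘ τ₂ = (ρ' ∘ Fin.natAdd m) ∘ τ₂' := by
    rw [← mul_finSumCongr_comp_natAdd, h, mul_finSumCongr_comp_natAdd]
  have hc := hρ.1.eq_of_comp_perm_eq hρ'.1 hcast
  have hn := hρ.2.eq_of_comp_perm_eq hρ'.2 hnat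
  refine ⟨Equiv.ext fun r => Fin.addCases (congrFun hc) (congrFun hn) r, ?_, ?_⟩
  · rw [hc] at hcast
    exact Equiv.ext fun i => hρ'.1.injective (congrFun hcast i)
  · rw [hn] at hnat
    exact Equiv.ext fun j => hρ'.2.injective (congrFun hnat j)

theorem exists_isShuffle_mul_finSumCongr (σ : Perm (Fin (m + n))) :
    ∃ ρ τ₁ τ₂, IsShuffle ρ ∧ ρ * finSumCongr τ₁ τ₂ = σ := by
  set s₁ := Tuple.sort (σ ∘ Fin.castAdd n)
  set s₂ := Tuple.sort (σ ∘ Fin.natAdd m)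
  refine ⟨σ * finSumCongr s₁ s₂, s₁⁻¹, s₂⁻¹, ⟨?_, ?_⟩, ?_⟩
  · rw [mul_finSumCongr_comp_castAdd]
    exact (Tuple.monotone_sort _).strictMono_of_injective
      ((σ.injective.comp (Fin.castAdd_injective m n)).comp s₁.injective)
  · rw [mul_finSumCongr_comp_natAdd]
    exact (Tuple.monotone_sort _).strictMono_of_injective
      ((σ.injective.comp (Fin.natAdd_injective n m)).comp s₂.injective)
  · ext r
    refine Fin.addCases (fun i => ?_) (fun j => ?_) r <;> simp

theorem mem_range_comp_castAdd_iff (ρ : Perm (Fin (m + n))) (t : Fin (m + n)) :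
    t ∈ Set.range (ρ ∘ Fin.castAdd n) ↔ t ∉ Set.range (ρ ∘ Fin.natAdd m) := by
  obtain ⟨r, rfl⟩ := ρ.surjective t
  refine Fin.addCases (fun i => ?_) (fun j => ?_) r <;> simp [Fin.ext_iff] <;> omega

theorem IsShuffle.ext_natAdd {ρ ρ' : Perm (Fin (m + n))} (hρ : ρ.IsShuffle)
    (hρ' : ρ'.IsShuffle) (h : ∀ j, ρ (Fin.natAdd m j) = ρ' (Fin.natAdd m j)) : ρ = ρ' := by
  have hcast : ρ ∘ Fin.castAdd n = ρ' ∘ Fin.castAdd n := by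
    rw [← hρ.1.range_inj hρ'.1]
    ext t
    rw [mem_range_comp_castAdd_iff, mem_range_comp_castAdd_iff,
      show ρ ∘ Fin.natAdd m = ρ' ∘ Fin.natAdd m from funext h]
  exact Equiv.ext fun r => Fin.addCases (congrFun hcast) h r

open Classical in
noncomputable def shuffles (m n : ℕ) : Finset (Perm (Fin (m + n))) :=
  univ.filter IsShuffle

theorem mem_shuffles {ρ : Perm (Fin (m + n))} : ρ ∈ shuffles m n ↔ IsShuffle ρ := by
  simp [shuffles]

theorem sum_shuffles_mul_finSumCongr {β : Type*} [AddCommMonoid β] (F : Perm (Fin (m + n)) → β) :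
    ∑ ρ ∈ shuffles m n, ∑ τ₁, ∑ τ₂, F (ρ * finSumCongr τ₁ τ₂) = ∑ σ, F σ := by
  rw [← sum_congr rfl fun ρ _ => sum_product' univ univ fun τ₁ τ₂ => F (ρ * finSumCongr τ₁ τ₂),
    ← sum_product']
  refine sum_nbij (fun q => q.1 * finSumCongr q.2.1 q.2.2) (by simp) ?_ ?_ (fun _ _ => rfl)
  · rintro ⟨ρ, τ₁, τ₂⟩ hq ⟨ρ', τ₁', τ₂'⟩ hq' h
    simp only [coe_product, coe_univ, Set.mem_prod, mem_coe, mem_shuffles] at hq hq'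
    obtain ⟨rfl, rfl, rfl⟩ := hq.1.eq_of_mul_finSumCongr_eq hq'.1 h
    rfl
  · intro σ _
    obtain ⟨ρ, τ₁, τ₂, hρ, rfl⟩ := exists_isShuffle_mul_finSumCongr σ
    exact ⟨(ρ, τ₁, τ₂), by simp [mem_shuffles, hρ], rfl⟩

end Equiv.Perm

theorem Matrix.det_eq_sum_shuffles {R : Type*} [CommRing R] {m n : ℕ}
    (A : Matrix (Fin (m + n)) (Fin (m + n)) R) :
    A.det = ∑ ρ ∈ Perm.shuffles m n, ((Perm.sign ρ : ℤ) : R) *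
      (A.submatrix (ρ ∘ Fin.castAdd n) (Fin.castAdd n)).det *
      (A.submatrix (ρ ∘ Fin.natAdd m) (Fin.natAdd m)).det := by
  rw [det_apply', ← Perm.sum_shuffles_mul_finSumCongr]
  refine sum_congr rfl fun ρ _ => ?_
  rw [det_apply', det_apply', mul_assoc, sum_mul_sum, mul_sum]
  refine sum_congr rfl fun τ₁ _ => ?_
  rw [mul_sum]
  refine sum_congr rfl fun τ₂ _ => ?_
  simp only [Perm.sign_mul, Perm.sign_finSumCongr, Fin.prod_univ_add, Perm.mul_apply,
    Perm.finSumCongr_castAdd, Perm.finSumCongr_natAdd, submatrix_apply, Function.comp_apply]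
  push_cast
  ring

section BoxPartition

variable {M N : ℕ} (lam : Fin M → Fin (N + 1))

/-- `λ† = (N - λ_M, …, N - λ_1)'`, the conjugate of the complement of `λ` in the box. -/
def dualPart (j : Fin N) : ℕ := #{k | (j : ℕ) + 1 ≤ N - lam k}

theorem dualPart_le (j : Fin N) : dualPart lam j ≤ M :=
  (card_filter_le _ _).trans (card_fin M).le

/-- In the matrix `(p (N + M - 1 - r)).eval (z c)`, row `xRow lam i` carries `p (λ i + M - 1 - i)`
and row `yRow lam j` carries `p (λ† j + N - 1 - j)`. -/
def xRow (i : Fin M) : Fin (N + M) := ⟨N + i - lam i, by omega⟩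

def yRow (j : Fin N) : Fin (N + M) := ⟨M + j - dualPart lam j, by omega⟩

variable {lam}

theorem xRow_strictMono (hlam : Antitone lam) : StrictMono (xRow lam) := by
  intro i i' h
  have := hlam h.le
  simp only [xRow, Fin.lt_def, Fin.le_def] at *
  omega

theorem yRow_strictMono : StrictMono (yRow lam) := by
  intro j j' h
  have : dualPart lam j' ≤ dualPart lam j :=
    card_le_card fun k => by simp only [mem_filter, mem_univ, true_and]; omega
  have := dualPart_le lam j
  simp only [yRow, Fin.lt_def] at *
  omega

theorem xRow_lt_yRow (hlam : Antitone lam) {i : Fin M} {j : Fin N} (h : N ≤ (j : ℕ) + lam i) :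
    xRow lam i < yRow lam j := by
  have : dualPart lam j ≤ #(Ioi i) := card_le_card fun k hk => by
    simp only [mem_filter, mem_univ, true_and, mem_Ioi] at hk ⊢
    by_contra! hki
    have := hlam hki
    rw [Fin.le_def] at this
    omega
  rw [Fin.card_Ioi] at this
  simp only [xRow, yRow, Fin.lt_def]
  omega

theorem yRow_lt_xRow (hlam : Antitone lam) {i : Fin M} {j : Fin N} (h : (j : ℕ) + lam i < N) :
    yRow lam j < xRow lam i := by
  have : #(Ici i) ≤ dualPart lam j := card_le_card fun k hk => by
    have := hlam (mem_Ici.1 hk)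
    rw [Fin.le_def] at this
    simp only [mem_filter, mem_univ, true_and]
    omega
  rw [Fin.card_Ici] at this
  have := dualPart_le lam j
  simp only [xRow, yRow, Fin.lt_def]
  omega

theorem xRow_lt_yRow_iff (hlam : Antitone lam) {i : Fin M} {j : Fin N} :
    xRow lam i < yRow lam j ↔ N ≤ (j : ℕ) + lam i :=
  ⟨fun h => by_contra fun h' => (yRow_lt_xRow hlam (not_le.1 h')).not_gt h, xRow_lt_yRow hlam⟩

theorem yRow_ne_xRow (hlam : Antitone lam) (j : Fin N) (i : Fin M) : yRow lam j ≠ xRow lam i := by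
  rcases le_or_gt N ((j : ℕ) + lam i) with h | h
  exacts [(xRow_lt_yRow hlam h).ne', (yRow_lt_xRow hlam h).ne]

noncomputable def partShuffle (hlam : Antitone lam) : Perm (Fin (N + M)) :=
  Equiv.ofBijective (Fin.append (yRow lam) (xRow lam)) <| Finite.injective_iff_bijective.1 <|
    Fin.append_injective_iff.2
      ⟨yRow_strictMono.injective, (xRow_strictMono hlam).injective, yRow_ne_xRow hlam⟩

@[simp]
theorem partShuffle_castAdd (hlam : Antitone lam) (j : Fin N) :
    partShuffle hlam (Fin.castAdd M j) = yRow lam j := by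
  simp [partShuffle]

@[simp]
theorem partShuffle_natAdd (hlam : Antitone lam) (i : Fin M) :
    partShuffle hlam (Fin.natAdd N i) = xRow lam i := by
  simp [partShuffle]

theorem isShuffle_partShuffle (hlam : Antitone lam) : (partShuffle hlam).IsShuffle :=
  ⟨by convert (yRow_strictMono (lam := lam)); ext; simp,
    by convert xRow_strictMono hlam; ext; simp⟩

theorem card_filter_xRow_lt_yRow (hlam : Antitone lam) (i : Fin M) :
    #{j | xRow lam i < yRow lam j} = lam i := by
  have hcompl := card_filter_add_card_filter_not (s := univ)
    fun j : Fin N => (j : ℕ) < N - lam i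
  rw [Fin.card_filter_val_lt, card_univ, Fintype.card_fin] at hcompl
  have := (lam i).isLt
  rw [filter_congr fun j _ => (xRow_lt_yRow_iff (j := j) hlam).trans
    (by omega : _ ↔ ¬ (j : ℕ) < N - lam i)]
  omega

theorem sign_partShuffle (hlam : Antitone lam) :
    Perm.sign (partShuffle hlam) = (-1) ^ ∑ i, (lam i : ℕ) := by
  rw [Perm.sign_eq_prod_prod_Ioi, Fin.prod_prod_Ioi_add]
  simp only [partShuffle_castAdd, partShuffle_natAdd]
  rw [prod_eq_one fun j _ => prod_eq_one fun j' hj' => if_pos (yRow_strictMono (mem_Ioi.1 hj')),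
    prod_eq_one fun i _ => prod_eq_one fun i' hi' => if_pos (xRow_strictMono hlam (mem_Ioi.1 hi')),
    one_mul, one_mul, prod_comm, ← prod_pow_eq_pow_sum]
  refine prod_congr rfl fun i _ => ?_
  rw [prod_ite, prod_const_one, prod_const, one_mul, ← card_filter_xRow_lt_yRow hlam i]
  congr 2
  ext j
  simp only [mem_filter, mem_univ, true_and, not_lt]
  exact (yRow_ne_xRow hlam j i).symm.le_iff_lt

theorem eq_of_partShuffle_eq {lam' : Fin M → Fin (N + 1)} (hlam : Antitone lam)
    (hlam' : Antitone lam') (h : partShuffle hlam = partShuffle hlam') : lam = lam' := by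
  funext i
  have := congrArg (fun ρ => (ρ (Fin.natAdd N i) : ℕ)) h
  simp only [partShuffle_natAdd, xRow] at this
  have := (lam i).isLt
  have := (lam' i).isLt
  ext
  omega

theorem exists_partShuffle_eq {ρ : Perm (Fin (N + M))} (hρ : ρ.IsShuffle) :
    ∃ (lam : Fin M → Fin (N + 1)) (hlam : Antitone lam), partShuffle hlam = ρ := by
  have hlow (i : Fin M) : (i : ℕ) ≤ ρ (Fin.natAdd N i) := by
    have := Fin.val_sub_le_val_sub_of_strictMono hρ.2 ⟨0, i.pos⟩ i
    simp only [Function.comp_apply] at this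
    omega
  have hup (i : Fin M) : (ρ (Fin.natAdd N i) : ℕ) ≤ N + i := by
    have h₁ := Fin.val_sub_le_val_sub_of_strictMono hρ.2 i ⟨M - 1, by have := i.isLt; omega⟩
    have h₂ := (ρ (Fin.natAdd N ⟨M - 1, by have := i.isLt; omega⟩)).isLt
    simp only [Function.comp_apply] at h₁
    omega
  let lam (i : Fin M) : Fin (N + 1) := ⟨N + i - ρ (Fin.natAdd N i), by grind⟩
  have hlam : Antitone lam := fun i i' hii' => by
    have := Fin.val_sub_le_val_sub_of_strictMono hρ.2 i i'
    simp only [Function.comp_apply] at this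
    simp only [lam, Fin.le_def] at hii' ⊢
    grind
  refine ⟨lam, hlam, (isShuffle_partShuffle hlam).ext_natAdd hρ fun i => ?_⟩
  rw [partShuffle_natAdd, Fin.ext_iff]
  simp only [xRow, lam]
  grind

theorem sum_shuffles_eq_sum_antitone {β : Type*} [AddCommMonoid β] (F : Perm (Fin (N + M)) → β)
    (G : (Fin M → Fin (N + 1)) → β)
    (hFG : ∀ lam (hlam : Antitone lam), F (partShuffle hlam) = G lam) :
    ∑ ρ ∈ Perm.shuffles N M, F ρ = ∑ lam ∈ univ.filter
      (fun lam : Fin M → Fin (N + 1) => ∀ i j : Fin M, i ≤ j → (lam j : ℕ) ≤ (lam i : ℕ)),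
        G lam := by
  refine (sum_bij (fun lam h => partShuffle (mem_filter.1 h).2)
    (fun lam h => Perm.mem_shuffles.2 (isShuffle_partShuffle _))
    (fun lam h lam' h' => eq_of_partShuffle_eq _ _) (fun ρ hρ => ?_)
    (fun lam h => (hFG lam _).symm)).symm
  obtain ⟨lam, hlam, rfl⟩ := exists_partShuffle_eq (Perm.mem_shuffles.1 hρ)
  exact ⟨lam, mem_filter.2 ⟨mem_univ _, fun i j => @hlam i j⟩, rfl⟩

variable {R : Type*} [CommRing R] (p : ℕ → R[X]) (x : Fin M → R) (y : Fin N → R)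

theorem submatrix_partShuffle_natAdd (hlam : Antitone lam) :
    (of fun r c : Fin (N + M) => (p (N + M - 1 - r)).eval (Fin.append y x c)).submatrix
      (partShuffle hlam ∘ Fin.natAdd N) (Fin.natAdd N) =
      of fun i j : Fin M => (p (lam i + (M - 1 - i))).eval (x j) := by
  ext i j
  have := (lam i).isLt
  simp only [submatrix_apply, of_apply, Function.comp_apply, partShuffle_natAdd, xRow,
    Fin.append_right]
  congr 2
  omega

theorem submatrix_partShuffle_castAdd (hlam : Antitone lam) :
    (of fun r c : Fin (N + M) => (p (N + M - 1 - r)).eval (Fin.append y x c)).submatrix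
      (partShuffle hlam ∘ Fin.castAdd M) (Fin.castAdd M) =
      of fun i j : Fin N => (p (dualPart lam i + (N - 1 - i))).eval (y j) := by
  ext i j
  have := dualPart_le lam i
  simp only [submatrix_apply, of_apply, Function.comp_apply, partShuffle_castAdd, yRow,
    Fin.append_left]
  congr 2
  omega

end BoxPartition

/-- Dual Cauchy identity for generalized (monic degree-graded) Schur-type determinants:
`Δ(y) Δ(x) ∏ᵢ∏ⱼ (yⱼ - xᵢ) = ∑_λ (-1)^{|λ|} s̃_λ(x) s̃_{λ†}(y)`. -/
theorem dual_cauchy_tilde {R : Type*} [CommRing R] (M N : ℕ) (p : ℕ → Polynomial R)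
    (hmonic : ∀ n, (p n).Monic) (hdeg : ∀ n, (p n).natDegree = n)
    (x : Fin M → R) (y : Fin N → R) :
    (∏ i : Fin N, ∏ j ∈ Finset.Ioi i, (y i - y j)) *
        (∏ i : Fin M, ∏ j ∈ Finset.Ioi i, (x i - x j)) *
        ∏ i : Fin M, ∏ j : Fin N, (y j - x i) =
      ∑ lam ∈ Finset.univ.filter
          (fun lam : Fin M → Fin (N + 1) => ∀ i j : Fin M, i ≤ j → (lam j : ℕ) ≤ (lam i : ℕ)),
        (-1 : R) ^ (∑ i : Fin M, (lam i : ℕ)) *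
          (Matrix.of fun i j : Fin M =>
            (p ((lam i : ℕ) + (M - 1 - (i : ℕ)))).eval (x j)).det *
          (Matrix.of fun i j : Fin N =>
            (p ((Finset.univ.filter
                  (fun k : Fin M => (i : ℕ) + 1 ≤ N - (lam k : ℕ))).card
              + (N - 1 - (i : ℕ)))).eval (y j)).det := by
  rw [← Fin.prod_prod_Ioi_sub_append, ← det_eval_rev_eq_prod_prod_Ioi p hmonic hdeg,
    det_eq_sum_shuffles]
  refine sum_shuffles_eq_sum_antitone _ _ fun lam hlam => ?_
  rw [submatrix_partShuffle_natAdd, submatrix_partShuffle_castAdd, sign_partShuffle hlam,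
    mul_right_comm]
  push_cast
  rfl
end

section
/- For the falling-factorial sequence, the analogue of the elementary symmetric polynomial admits the explicit expansion: e^{\Delta^+}_k(x_1,...,x_N) = \sum_{1 \leq i_1 < \cdots < i_k \leq N} (x_{i_1} - N + k - 1 + i_1)(x_{i_2} - N + k - 2 + i_2) \cdots (x_{i_k} - N + i_k), where e^{\Delta^+}_k(x_1,...,x_N) = \det( p_{\mu_i + N - i}(x_j) ) / \det( p_{N-i}(x_j) ) with p_n(x) = x^{\underline{n}} the falling factorial and \mu = (1^k, 0^{N-k}). -/
/-!
Adjoin a variable `t` to `x`. The descending falling-factorial alternant of `(t, x₁, …, x_N)` is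
the Vandermonde product `∏ⱼ (t - xⱼ) · V(x)`, and its Laplace expansion along the `t`-column is
`∑ₖ (-1)ᵏ (t)_{N-k} · a_k(x)`, where `a_k` is the alternant of the theorem. On the other hand,
multiplying out `∏ⱼ (t - xⱼ)` one factor at a time with `(t)_m (t - y) = (t)_{m+1} + (m - y) (t)_m`
expands it in the falling-factorial basis with coefficients `(-1)ᵏ e_k`, `e_k` the explicit sum.
Falling factorials are monic of distinct degrees, so the two expansions agree coefficientwise:
`a_k = V · e_k`.
-/

open Finset Matrix Polynomial

namespace Polynomial

variable {R : Type*} [CommRing R]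

theorem natDegree_descPochhammer_le (n : ℕ) : (descPochhammer R n).natDegree ≤ n := by
  rw [← descPochhammer_map (Int.castRingHom R)]
  exact natDegree_map_le.trans (descPochhammer_natDegree ℤ n).le

theorem coeff_descPochhammer_self (n : ℕ) : (descPochhammer R n).coeff n = 1 := by
  have h := (monic_descPochhammer ℤ n).coeff_natDegree
  rw [descPochhammer_natDegree] at h
  rw [← descPochhammer_map (Int.castRingHom R), coeff_map, h, map_one]

theorem descPochhammer_mul_X_sub_C (n : ℕ) (a : R) :
    descPochhammer R n * (X - C a) = descPochhammer R (n + 1) + C (n - a) * descPochhammer R n := by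
  rw [descPochhammer_succ_right, map_sub, map_natCast]
  ring

theorem eq_zero_of_sum_C_mul_descPochhammer_eq_zero {N : ℕ} {b : ℕ → R}
    (h : ∑ k ∈ range (N + 1), C (b k) * descPochhammer R (N - k) = 0) : ∀ k ≤ N, b k = 0 := by
  induction N generalizing b with
  | zero => simpa using h
  | succ N ih =>
    rw [sum_range_succ'] at h
    have hb0 : b 0 = 0 := by
      have htop := congrArg (coeff · (N + 1)) h
      simp only [finsetSum_coeff, coeff_add, coeff_C_mul, coeff_zero, Nat.sub_zero,
        coeff_descPochhammer_self, mul_one] at htop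
      rwa [sum_eq_zero fun k _ => by
        rw [coeff_eq_zero_of_natDegree_lt ((natDegree_descPochhammer_le _).trans_lt (by omega)),
          mul_zero], zero_add] at htop
    rw [hb0, map_zero, zero_mul, add_zero] at h
    simp only [Nat.add_sub_add_right] at h
    rintro (_ | k) hk
    · exact hb0
    · exact ih h k (by omega)

end Polynomial

namespace Finset

theorem card_filter_lt_orderEmbOfFin {α : Type*} [LinearOrder α] (S : Finset α) {k : ℕ}
    (h : #S = k) (a : Fin k) : #{t ∈ S | t < S.orderEmbOfFin h a} = a := by
  set e := S.orderEmbOfFin h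
  have hS : S = univ.map e.toEmbedding := (map_orderEmbOfFin_univ S h).symm
  rw [hS, filter_map, card_map]
  simp only [Function.comp_def, RelEmbedding.coe_toEmbedding, OrderEmbedding.lt_iff_lt]
  rw [← Fin.card_Iio a]
  congr 1
  ext b
  simp

theorem prod_orderEmbOfFin {α M : Type*} [LinearOrder α] [CommMonoid M] (S : Finset α) {k : ℕ}
    (h : #S = k) (f : α → M) : ∏ a : Fin k, f (S.orderEmbOfFin h a) = ∏ s ∈ S, f s := by
  conv_rhs => rw [← map_orderEmbOfFin_univ S h]
  rw [prod_map]
  rfl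

theorem card_filter_lt_map_succ {N : ℕ} (T : Finset (Fin N)) (s : Fin N) :
    #{t ∈ T.map (Fin.succEmb N) | t < Fin.succEmb N s} = #{t ∈ T | t < s} := by
  rw [filter_map, card_map]
  simp [Function.comp_def, Fin.succ_lt_succ_iff]

theorem sum_powerset_map {α β M : Type*} [AddCommMonoid M] [DecidableEq β] (e : α ↪ β)
    (s : Finset α) (f : Finset β → M) :
    ∑ t ∈ (s.map e).powerset, f t = ∑ t ∈ s.powerset, f (t.map e) := by
  classical
  rw [map_eq_image, powerset_image, sum_image fun t _ u _ h => by
    simpa only [← map_eq_image, map_inj] using h]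
  simp only [map_eq_image]

theorem sum_powerset_univ_fin_succ {M : Type*} [AddCommMonoid M] (N : ℕ)
    (f : Finset (Fin (N + 1)) → M) :
    ∑ S ∈ (univ : Finset (Fin (N + 1))).powerset, f S =
      ∑ T ∈ (univ : Finset (Fin N)).powerset, f (T.map (Fin.succEmb N)) +
        ∑ T ∈ (univ : Finset (Fin N)).powerset, f (insert 0 (T.map (Fin.succEmb N))) := by
  rw [Fin.univ_succ, cons_eq_insert, sum_powerset_insert (by simp [Fin.succ_ne_zero]),
    sum_powerset_map, sum_powerset_map]
  rfl

end Finset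

section Alternant

variable {R : Type*} [CommRing R]

theorem det_descPochhammer_eval_eq_prod (n : ℕ) (v : Fin n → R) :
    (of fun i j : Fin n => (descPochhammer R (n - 1 - i)).eval (v j)).det =
      ∏ i, ∏ j ∈ Ioi i, (v i - v j) := by
  set P : Matrix (Fin n) (Fin n) R := of fun i j => (descPochhammer R j).eval (v i)
  have hP : P = vandermonde v * of fun i j : Fin n => (descPochhammer R j).coeff i :=
    eval_matrixOfPolynomials_eq_vandermonde_mul_matrixOfPolynomials v _
      fun j => natDegree_descPochhammer_le j
  have hcoeff : (of fun i j : Fin n => (descPochhammer R j).coeff i).det = 1 := by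
    rw [det_of_isUpperTriangular]
    · simp [coeff_descPochhammer_self]
    · intro i j hji
      exact coeff_eq_zero_of_natDegree_lt ((natDegree_descPochhammer_le _).trans_lt hji)
  calc _ = (P.submatrix id Fin.revPerm).det := by
        rw [← det_transpose]
        congr 1
        ext i j
        simp [P, Fin.val_rev, Nat.sub_sub, add_comm]
    _ = ((vandermonde v).submatrix id Fin.revPerm).det := by
        rw [det_permute', det_permute', hP, det_mul, hcoeff, mul_one]
    _ = (projVandermonde 1 v).det := by
        congr 1
        ext i j
        simp [projVandermonde_apply]
    _ = _ := by simp [det_projVandermonde]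

/-- The paper's `det (p_{μ_i + N - i}(x_j))` for `μ = (1^k)`, with rows indexed from `0`. -/
noncomputable def fallingAlternant (N k : ℕ) (x : Fin N → R) : R :=
  (of fun i j : Fin N =>
    (descPochhammer R ((if (i : ℕ) < k then 1 else 0) + (N - 1 - (i : ℕ)))).eval (x j)).det

theorem fallingAlternant_map {S : Type*} [CommRing S] (f : R →+* S) (N k : ℕ) (x : Fin N → R) :
    fallingAlternant N k (fun j => f (x j)) = f (fallingAlternant N k x) := by
  rw [fallingAlternant, fallingAlternant, RingHom.map_det]
  congr 1
  ext i j
  rw [RingHom.mapMatrix_apply, map_apply, of_apply, of_apply, ← eval_map_apply,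
    descPochhammer_map]

theorem prod_Ioi_sub_cons (N : ℕ) (t : R) (x : Fin N → R) :
    ∏ i : Fin (N + 1), ∏ j ∈ Ioi i,
        ((Fin.cons t x : Fin (N + 1) → R) i - (Fin.cons t x : Fin (N + 1) → R) j) =
      (∏ j, (t - x j)) * ∏ i, ∏ j ∈ Ioi i, (x i - x j) := by
  rw [Fin.prod_univ_succ, Fin.prod_Ioi_zero]
  simp only [Fin.cons_zero, Fin.cons_succ]
  congr 1
  refine prod_congr rfl fun i _ => ?_
  rw [Fin.prod_Ioi_succ]
  simp only [Fin.cons_succ]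

theorem prod_sub_mul_prod_Ioi_eq_sum_fallingAlternant (N : ℕ) (t : R) (x : Fin N → R) :
    (∏ j, (t - x j)) * ∏ i, ∏ j ∈ Ioi i, (x i - x j) =
      ∑ i : Fin (N + 1), (-1) ^ (i : ℕ) * (descPochhammer R (N - i)).eval t *
        fallingAlternant N i x := by
  rw [← prod_Ioi_sub_cons, ← det_descPochhammer_eval_eq_prod, det_succ_column_zero]
  refine sum_congr rfl fun i _ => ?_
  simp only [of_apply, Fin.cons_zero, fallingAlternant]
  congr 2
  ext r j
  simp only [submatrix_apply, of_apply, Fin.cons_succ]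
  congr 2
  rcases lt_or_ge r.castSucc i with h | h
  · rw [Fin.succAbove_of_castSucc_lt _ _ h]
    simp only [Fin.lt_def, Fin.val_castSucc] at h ⊢
    rw [if_pos h]
    omega
  · rw [Fin.succAbove_of_le_castSucc _ _ h]
    simp only [Fin.le_def, Fin.val_castSucc] at h
    rw [if_neg (by omega), Fin.val_succ]
    omega

end Alternant

section FallingWeight

variable {R : Type*} [CommRing R]

/-- The factor of `s ∈ S` is the paper's `x_{i_a} - N + k - a + i_a`, where `a` is the rank of `s`
in `S`; both `a` and `s` are counted from `0` here. -/
noncomputable def fallingWeight (N : ℕ) (x : Fin N → R) (S : Finset (Fin N)) : R :=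
  ∏ s ∈ S, (x s + #S - N - #{t ∈ S | t < s} + (s : ℕ))

theorem fallingWeight_map_succ (N : ℕ) (a : R) (x : Fin N → R) (T : Finset (Fin N)) :
    fallingWeight (N + 1) (Fin.cons a x) (T.map (Fin.succEmb N)) = fallingWeight N x T := by
  rw [fallingWeight, prod_map, card_map, fallingWeight]
  refine prod_congr rfl fun s _ => ?_
  rw [card_filter_lt_map_succ]
  simp only [Fin.coe_succEmb, Fin.cons_succ, Fin.val_succ]
  push_cast
  ring

theorem fallingWeight_insert_zero (N : ℕ) (a : R) (x : Fin N → R) (T : Finset (Fin N)) :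
    fallingWeight (N + 1) (Fin.cons a x) (insert 0 (T.map (Fin.succEmb N))) =
      (a + #T - N) * fallingWeight N x T := by
  have h0 : (0 : Fin (N + 1)) ∉ T.map (Fin.succEmb N) := by simp [Fin.succ_ne_zero]
  rw [fallingWeight, prod_insert h0, card_insert_of_notMem h0, card_map, prod_map, fallingWeight]
  congr 1
  · simp only [Fin.cons_zero, Nat.cast_add, Nat.cast_one, not_lt_zero, filter_false, card_empty,
      Nat.cast_zero, sub_zero, Fin.coe_ofNat_eq_mod, Nat.zero_mod, add_zero]
    ring
  · refine prod_congr rfl fun s _ => ?_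
    rw [filter_insert, if_pos (show 0 < Fin.succEmb N s from Fin.succ_pos s),
      card_insert_of_notMem fun h => h0 (mem_filter.mp h).1, card_filter_lt_map_succ]
    simp only [Fin.coe_succEmb, Fin.cons_succ, Fin.val_succ]
    push_cast
    ring

theorem prod_X_sub_C_eq_sum_fallingWeight (N : ℕ) (x : Fin N → R) :
    ∏ j, (X - C (x j)) = ∑ S ∈ (univ : Finset (Fin N)).powerset,
      C ((-1) ^ #S * fallingWeight N x S) * descPochhammer R (N - #S) := by
  induction N with
  | zero => simp [fallingWeight]
  | succ N ih =>
    refine Fin.consCases (fun a y => ?_) x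
    rw [Fin.prod_univ_succ, sum_powerset_univ_fin_succ, ← sum_add_distrib]
    simp only [Fin.cons_zero, Fin.cons_succ, ih y, mul_sum]
    refine sum_congr rfl fun T _ => ?_
    have hT : #T ≤ N := card_le_univ T |>.trans_eq (Fintype.card_fin N)
    have h0 : (0 : Fin (N + 1)) ∉ T.map (Fin.succEmb N) := by simp [Fin.succ_ne_zero]
    rw [fallingWeight_map_succ, fallingWeight_insert_zero, card_insert_of_notMem h0, card_map,
      show N + 1 - #T = N - #T + 1 by omega, Nat.add_sub_add_right, mul_left_comm,
      mul_comm (X - C a), descPochhammer_mul_X_sub_C, Nat.cast_sub hT]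
    simp only [map_mul, map_sub, map_add, map_pow, map_neg, map_one, map_natCast]
    ring

end FallingWeight

section Main

variable {R : Type*} [CommRing R]

theorem fallingAlternant_eq_prod_mul_sum_fallingWeight {N k : ℕ} (hk : k ≤ N) (x : Fin N → R) :
    fallingAlternant N k x =
      (∏ i, ∏ j ∈ Ioi i, (x i - x j)) * ∑ S ∈ powersetCard k univ, fallingWeight N x S := by
  set V := ∏ i, ∏ j ∈ Ioi i, (x i - x j)
  set e : ℕ → R := fun m => ∑ S ∈ powersetCard m univ, fallingWeight N x S
  have heval_X (n : ℕ) : (descPochhammer R[X] n).eval X = descPochhammer R n := by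
    rw [← descPochhammer_map C, eval_map, eval₂_C_X]
  have hexp := prod_sub_mul_prod_Ioi_eq_sum_fallingAlternant N (X : R[X]) fun j => C (x j)
  simp only [← map_sub, ← map_prod, fallingAlternant_map, heval_X] at hexp
  rw [prod_X_sub_C_eq_sum_fallingWeight, sum_powerset, card_univ, Fintype.card_fin,
    Fin.sum_univ_eq_sum_range (fun i => (-1) ^ i * descPochhammer R (N - i) *
      C (fallingAlternant N i x)), ← sub_eq_zero, sum_mul, ← sum_sub_distrib] at hexp
  have hcoeff := eq_zero_of_sum_C_mul_descPochhammer_eq_zero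
    (b := fun m => (-1) ^ m * (V * e m - fallingAlternant N m x)) <| by
    rw [← hexp]
    refine sum_congr rfl fun m _ => ?_
    rw [sum_congr rfl fun S hS => by rw [(mem_powersetCard.mp hS).2], ← sum_mul, ← map_sum,
      ← mul_sum]
    simp only [e, map_mul, map_sub, map_pow, map_neg, map_one]
    ring
  have hk' := hcoeff k hk
  rw [neg_one_pow_mul_eq_zero_iff, sub_eq_zero] at hk'
  exact hk'.symm

theorem sum_prod_orderEmbOfFin_eq_sum_fallingWeight (N k : ℕ) (x : Fin N → R) :
    ∑ S : {S : Finset (Fin N) // S.card = k},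
        ∏ a : Fin k,
          (x (S.1.orderEmbOfFin S.2 a) + (k : R) - (N : R) - ((a : ℕ) : R)
            + (((S.1.orderEmbOfFin S.2 a : Fin N) : ℕ) : R)) =
      ∑ S ∈ powersetCard k univ, fallingWeight N x S := by
  rw [sum_subtype _ fun S => mem_powersetCard_univ]
  refine sum_congr rfl fun ⟨S, hS⟩ _ => ?_
  dsimp only
  rw [fallingWeight, ← prod_orderEmbOfFin S hS]
  refine prod_congr rfl fun a _ => ?_
  rw [card_filter_lt_orderEmbOfFin, hS]

end Main

/-- Explicit expansion of the elementary symmetric analogue `e^{Δ⁺}_k` for the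
falling-factorial sequence `pₙ(x) = x(x-1)⋯(x-n+1)`, stated after multiplying both sides
by the Vandermonde determinant. -/
theorem e_forward_difference_explicit {R : Type*} [CommRing R] (N k : ℕ) (hk : k ≤ N)
    (x : Fin N → R) :
    (Matrix.of fun i j : Fin N =>
        (descPochhammer R ((if (i : ℕ) < k then 1 else 0) + (N - 1 - (i : ℕ)))).eval (x j)).det =
      (∏ i : Fin N, ∏ j ∈ Finset.Ioi i, (x i - x j)) *
        ∑ S : {S : Finset (Fin N) // S.card = k},
          ∏ a : Fin k,
            (x (S.1.orderEmbOfFin S.2 a) + (k : R) - (N : R) - ((a : ℕ) : R)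
              + (((S.1.orderEmbOfFin S.2 a : Fin N) : ℕ) : R)) := by
  rw [sum_prod_orderEmbOfFin_eq_sum_fallingWeight]
  exact fallingAlternant_eq_prod_mul_sum_fallingWeight hk x
end

section
/- Let {p_n} be a polynomial sequence of binomial type with associated delta operator Q (so Q p_n = n p_{n-1}), and define h_k(x_1,...,x_N) = \det(p_{\mu_i+N-i}(x_j))/\det(p_{N-i}(x_j)) with \mu = (k,0,...,0). Then for k \geq 0, the shifted function satisfies the expansion h_k(x_1+u,...,x_N+u) = \sum_{l=0}^{k} \binom{N+k-1}{k-l} h_l(x_1,...,x_N) p_{k-l}(u). -/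
/-!
Row `i ≥ 1` of the shifted alternant is `p_{N-1-i}(x + u)`; by the binomial identity (and
`p_0 = 1`) it is `p_{N-1-i}(x)` plus a combination of the rows `p_s(x)`, `s < N-1-i`, lying
below it, so these rows can be unshifted by a unitriangular row operation. Expanding the
remaining top row `p_{k+N-1}(x + u)` multilinearly gives
`∑_s C(k+N-1, s) p_{k+N-1-s}(u) · det(p_s(x) on top of the rows of δ)`; for `s < N - 1` the top
row repeats a lower one, and `s = l + N - 1` gives the alternant of `(l) + δ`.
-/

open Finset Matrix Polynomial

theorem Matrix.det_eq_of_sub_mem_span_Ioi {R n : Type*} [CommRing R] [Fintype n]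
    [DecidableEq n] [LinearOrder n] {M M' : Matrix n n R}
    (h : ∀ i, M i - M' i ∈ Submodule.span R (M' '' Set.Ioi i)) : M.det = M'.det := by
  choose c hc hsum using fun i =>
    (Finsupp.mem_span_image_iff_linearCombination R (v := fun i => M' i)).1 (h i)
  have hc_zero : ∀ i i', i' ≤ i → c i i' = 0 := fun i i' hle =>
    (Finsupp.mem_supported' R (c i)).1 (hc i) i' (not_lt.2 hle)
  set T : Matrix n n R := 1 + of fun i i' => c i i'
  have hT : T.BlockTriangular id := fun i i' (hlt : i' < i) => by
    simp [T, one_apply_ne hlt.ne', hc_zero i i' hlt.le]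
  have hM : M = T * M' := by
    rw [add_mul, Matrix.one_mul]
    ext i j
    have hrow := congrFun (hsum i) j
    rw [Finsupp.linearCombination_apply, Finsupp.sum_fintype _ _ (by simp)] at hrow
    simp only [Finset.sum_apply, Pi.smul_apply, smul_eq_mul, Pi.sub_apply] at hrow
    simp [mul_apply, hrow]
  rw [hM, det_mul, det_of_isUpperTriangular hT, Finset.prod_eq_one fun i _ => by
    simp [T, hc_zero i i le_rfl], one_mul]

theorem Matrix.det_updateRow_sum_smul {R n α : Type*} [CommRing R] [Fintype n]
    [DecidableEq n] (M : Matrix n n R) (i : n) (s : Finset α) (c : α → R) (v : α → n → R) :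
    (M.updateRow i (∑ a ∈ s, c a • v a)).det =
      ∑ a ∈ s, c a * (M.updateRow i (v a)).det := by
  simp_rw [← det_updateRow_smul]
  exact (detRowAlternating : (n → R) [⋀^n]→ₗ[R] R).map_update_sum s i _ M

section Alternant

variable {R ι : Type*} [CommRing R]

def IsBinomialType (p : ℕ → R[X]) : Prop :=
  ∀ (n : ℕ) (a b : R), (p n).eval (a + b) =
    ∑ j ∈ range (n + 1), (n.choose j : R) * (p j).eval a * (p (n - j)).eval b

def alternant (p : ℕ → R[X]) (d : ι → ℕ) (x : ι → R) : Matrix ι ι R :=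
  of fun i j => (p (d i)).eval (x j)

variable {p : ℕ → R[X]}

theorem IsBinomialType.eval_add_row (hp : IsBinomialType p) (n : ℕ) (x : ι → R) (u : R) :
    (fun j => (p n).eval (x j + u)) =
      ∑ s ∈ range (n + 1),
        ((n.choose s : R) * (p (n - s)).eval u) • fun j => (p s).eval (x j) := by
  funext j
  rw [hp, Finset.sum_apply]
  exact Finset.sum_congr rfl fun s _ => by simp only [Pi.smul_apply, smul_eq_mul]; ring

theorem IsBinomialType.eval_add_row_sub_mem_span (hp : IsBinomialType p) (hp0 : p 0 = 1)
    (n : ℕ) (x : ι → R) (u : R) :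
    (fun j => (p n).eval (x j + u)) - (fun j => (p n).eval (x j)) ∈
      Submodule.span R ((fun s j => (p s).eval (x j)) '' Set.Iio n) := by
  rw [hp.eval_add_row, sum_range_succ, Nat.choose_self, Nat.sub_self, hp0]
  simp only [Nat.cast_one, eval_one, mul_one, one_smul, add_sub_cancel_right]
  exact Submodule.sum_mem _ fun s hs =>
    Submodule.smul_mem _ _ (Submodule.subset_span ⟨s, mem_range.1 hs, rfl⟩)

theorem alternant_update [DecidableEq ι] (p : ℕ → R[X]) (d : ι → ℕ) (i : ι) (n : ℕ)
    (x : ι → R) :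
    alternant p (Function.update d i n) x =
      (alternant p d x).updateRow i (fun j => (p n).eval (x j)) := by
  ext i' j
  by_cases h : i' = i
  · subst h; simp [alternant]
  · simp [alternant, h]

theorem det_alternant_updateRow_eq_zero [Fintype ι] [DecidableEq ι] (p : ℕ → R[X])
    (d : ι → ℕ) (x : ι → R) {i i' : ι} (h : i' ≠ i) :
    ((alternant p d x).updateRow i (fun j => (p (d i')).eval (x j))).det = 0 :=
  det_zero_of_row_eq h.symm (by ext j; simp [updateRow_ne h, alternant])

/-- The exponents `μ + δ` of the one-row partition `μ = (m)`, with `δ = (N - 1, …, 1, 0)`. -/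
def oneRowDegrees (N m : ℕ) (i : Fin N) : ℕ := (if (i : ℕ) = 0 then m else 0) + (N - 1 - i)

variable {N : ℕ} [NeZero N]

theorem oneRowDegrees_eq_update (m : ℕ) :
    oneRowDegrees N m = Function.update (oneRowDegrees N 0) 0 (m + (N - 1)) := by
  ext i
  by_cases h : i = 0
  · subst h; simp [oneRowDegrees]
  · simp [oneRowDegrees, h, Fin.val_eq_zero_iff]

theorem IsBinomialType.det_alternant_oneRowDegrees_add (hp : IsBinomialType p) (hp0 : p 0 = 1)
    (m : ℕ) (x : Fin N → R) (u : R) :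
    (alternant p (oneRowDegrees N m) fun j => x j + u).det =
      ((alternant p (oneRowDegrees N 0) x).updateRow 0
        (fun j => (p (m + (N - 1))).eval (x j + u))).det := by
  apply det_eq_of_sub_mem_span_Ioi
  intro i
  by_cases hi : i = 0
  · subst hi
    convert Submodule.zero_mem _
    ext j
    simp [alternant, oneRowDegrees]
  have hrow : alternant p (oneRowDegrees N m) (fun j => x j + u) i -
      (alternant p (oneRowDegrees N 0) x).updateRow 0 (fun j => (p (m + (N - 1))).eval (x j + u)) i
      = (fun j => (p (N - 1 - i)).eval (x j + u)) - (fun j => (p (N - 1 - i)).eval (x j)) := by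
    ext j
    simp [alternant, oneRowDegrees, hi]
  rw [hrow]
  refine Submodule.span_mono ?_ (hp.eval_add_row_sub_mem_span hp0 (N - 1 - i) x u)
  rintro _ ⟨s, hs : s < N - 1 - i, rfl⟩
  have hlt : N - 1 - s < N := by omega
  refine ⟨⟨N - 1 - s, hlt⟩, Fin.lt_def.2 (by simp; omega), ?_⟩
  have hne : (⟨N - 1 - s, hlt⟩ : Fin N) ≠ 0 := fun h => by simp [Fin.ext_iff] at h; omega
  ext j
  simp [updateRow_ne hne, alternant, oneRowDegrees, Nat.sub_sub_self (by omega : s ≤ N - 1)]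

theorem det_alternant_oneRowDegrees_zero_updateRow_of_lt (x : Fin N → R) {s : ℕ}
    (hs : s < N - 1) :
    ((alternant p (oneRowDegrees N 0) x).updateRow 0 (fun j => (p s).eval (x j))).det = 0 := by
  have hrow_s : oneRowDegrees N 0 ⟨N - 1 - s, by omega⟩ = s := by simp [oneRowDegrees]; omega
  have hne : (⟨N - 1 - s, by omega⟩ : Fin N) ≠ 0 := fun h => by simp [Fin.ext_iff] at h; omega
  simpa only [hrow_s] using det_alternant_updateRow_eq_zero p (oneRowDegrees N 0) x hne

theorem IsBinomialType.det_alternant_oneRowDegrees_add_eq_sum (hp : IsBinomialType p)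
    (hp0 : p 0 = 1) (m : ℕ) (x : Fin N → R) (u : R) :
    (alternant p (oneRowDegrees N m) fun j => x j + u).det =
      ∑ s ∈ range (m + (N - 1) + 1), ((m + (N - 1)).choose s : R) *
        (p (m + (N - 1) - s)).eval u *
          ((alternant p (oneRowDegrees N 0) x).updateRow 0 (fun j => (p s).eval (x j))).det := by
  rw [hp.det_alternant_oneRowDegrees_add hp0, hp.eval_add_row, det_updateRow_sum_smul]

end Alternant

theorem expansion_of_h_general {F : Type*} [Field F] (N : ℕ) (hN : 0 < N)
    (p : ℕ → Polynomial F)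
    (hmonic : ∀ n, (p n).Monic) (hdeg : ∀ n, (p n).natDegree = n)
    (hbin : ∀ (n : ℕ) (a b : F), (p n).eval (a + b) =
      ∑ j ∈ Finset.range (n + 1), (n.choose j : F) * (p j).eval a * (p (n - j)).eval b)
    (k : ℕ) (x : Fin N → F) (u : F) :
    (Matrix.of fun i j : Fin N =>
        (p ((if (i : ℕ) = 0 then k else 0) + (N - 1 - (i : ℕ)))).eval (x j + u)).det =
      ∑ l ∈ Finset.range (k + 1),
        ((N + k - 1).choose (k - l) : F) *
          (Matrix.of fun i j : Fin N =>
            (p ((if (i : ℕ) = 0 then l else 0) + (N - 1 - (i : ℕ)))).eval (x j)).det *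
          (p (k - l)).eval u := by
  have : NeZero N := ⟨hN.ne'⟩
  have hp0 : p 0 = 1 := eq_one_of_monic_natDegree_zero (hmonic 0) (hdeg 0)
  change (alternant p (oneRowDegrees N k) fun j => x j + u).det =
    ∑ l ∈ range (k + 1), _ * (alternant p (oneRowDegrees N l) x).det * _
  rw [IsBinomialType.det_alternant_oneRowDegrees_add_eq_sum hbin hp0,
    show k + (N - 1) + 1 = N - 1 + (k + 1) by omega, sum_range_add,
    sum_eq_zero fun s hs => by
      rw [det_alternant_oneRowDegrees_zero_updateRow_of_lt x (mem_range.1 hs), mul_zero],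
    zero_add]
  refine sum_congr rfl fun l hl => ?_
  have hl : l ≤ k := Nat.lt_succ_iff.1 (mem_range.1 hl)
  rw [oneRowDegrees_eq_update l, alternant_update, add_comm (N - 1) l, Nat.add_sub_add_right,
    Nat.choose_symm_of_eq_add (by omega : k + (N - 1) = l + (N - 1) + (k - l)),
    show N + k - 1 = k + (N - 1) by omega]
  ring

/-- Expansion of the complete-homogeneous Schur-type function `h_k` for a monic binomial-type
sequence: `h_k(x₁+u, …, x_N+u) = ∑_{l=0}^k C(N+k-1, k-l) h_l(x₁,…,x_N) p_{k-l}(u)`, stated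
after multiplying both sides by the difference product, i.e. as an identity of determinants. -/
theorem expansion_of_h {F : Type*} [Field F] [CharZero F] (N : ℕ) (hN : 0 < N)
    (p : ℕ → Polynomial F)
    (hmonic : ∀ n, (p n).Monic) (hdeg : ∀ n, (p n).natDegree = n)
    (hbin : ∀ (n : ℕ) (a b : F), (p n).eval (a + b) =
      ∑ j ∈ Finset.range (n + 1), (n.choose j : F) * (p j).eval a * (p (n - j)).eval b)
    (h0 : ∀ n : ℕ, (p n).eval 0 = if n = 0 then 1 else 0)
    (k : ℕ) (x : Fin N → F) (u : F) :
    (Matrix.of fun i j : Fin N =>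
        (p ((if (i : ℕ) = 0 then k else 0) + (N - 1 - (i : ℕ)))).eval (x j + u)).det =
      ∑ l ∈ Finset.range (k + 1),
        ((N + k - 1).choose (k - l) : F) *
          (Matrix.of fun i j : Fin N =>
            (p ((if (i : ℕ) = 0 then l else 0) + (N - 1 - (i : ℕ)))).eval (x j)).det *
          (p (k - l)).eval u :=
  expansion_of_h_general N hN p hmonic hdeg hbin k x u
end

section
/- Let {p_n} be a monic polynomial sequence of binomial type over a characteristic-zero field, and for a partition \lambda with at most N parts set \tilde{s}_\lambda(x_1,...,x_N) = \det(p_{\lambda_i+N-i}(x_j))_{i,j}. Then \tilde{s}_\lambda(x_1+u,...,x_N+u) = \sum_{\mu \subseteq \lambda} d_{\lambda\mu}(u) \tilde{s}_\mu(x_1,...,x_N), where the sum is over partitions \mu with \mu_i \leq \lambda_i for all i, and d_{\lambda\mu}(u) = \det( \binom{\lambda_i + N - i}{\lambda_i - \mu_j - i + j} p_{\lambda_i - \mu_j - i + j}(u) )_{1\leq i,j\leq N}, with the conventions \binom{m}{r} = 0 and p_r = 0 for r < 0. -/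
/-!
Write `L i = λᵢ + N - 1 - i`. The binomial-type identity factors the matrix `(p_{L i}(x_j + u))`
as `D * P` with `D i k = C(L i, k) p_{L i - k}(u)` and `P k j = p_k(x_j)`. Cauchy–Binet expands
`det (D * P)` over strictly decreasing column selections `g`. Since `D i k = 0` for `k > L i` and
`L` is decreasing, only selections with `g ≤ L` survive, and these are exactly `g = μ + δ` for the
partitions `μ ⊆ λ`; the minor of `D` at `μ + δ` is `d_{λμ}(u)` after `C(n, k) = C(n, n - k)`.
-/

open Finset Equiv

theorem Fin.strictAnti_iff_antitone_add_val {N : ℕ} {g : Fin N → ℕ} :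
    StrictAnti g ↔ Antitone fun i => g i + i := by
  cases N with
  | zero => exact ⟨fun _ => Subsingleton.antitone _, fun _ => Subsingleton.strictAnti _⟩
  | succ n =>
    rw [Fin.strictAnti_iff_succ_lt, Fin.antitone_iff_succ_le]
    refine forall_congr' fun i => ?_
    simp only [Fin.val_succ, Fin.val_castSucc]
    omega

theorem Fin.sub_le_of_antitone_add_val {N : ℕ} {g : Fin N → ℕ} (hg : Antitone fun i => g i + i)
    (i : Fin N) : N - 1 - i ≤ g i := by
  have hi := i.isLt
  have := hg (show i ≤ ⟨N - 1, by omega⟩ from Fin.mk_le_mk.mpr (by omega))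
  simp only at this
  omega

namespace Finset

variable {M : Type*} [AddCommMonoid M] {N : ℕ}

open Classical in
theorem sum_injective_eq_sum_strictAnti_sum_perm {ι : Type*} [Fintype ι] [LinearOrder ι]
    (f : (Fin N → ι) → M) :
    ∑ r : Fin N → ι with Function.Injective r, f r =
      ∑ g : Fin N → ι with StrictAnti g, ∑ σ : Perm (Fin N), f (g ∘ σ) := by
  rw [← sum_product']
  symm
  refine sum_bij (fun gσ _ => gσ.1 ∘ gσ.2) ?_ ?_ ?_ fun _ _ => rfl
  · rintro ⟨g, σ⟩ h
    simp only [mem_product, mem_filter_univ, mem_univ, and_true] at h ⊢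
    exact h.injective.comp σ.injective
  · rintro ⟨g₁, σ₁⟩ h₁ ⟨g₂, σ₂⟩ h₂ (heq : g₁ ∘ σ₁ = g₂ ∘ σ₂)
    simp only [mem_product, mem_filter_univ, mem_univ, and_true] at h₁ h₂
    obtain rfl : g₁ = g₂ := (h₁.range_inj h₂).mp <| by
      rw [← σ₁.surjective.range_comp, heq, σ₂.surjective.range_comp]
    obtain rfl : σ₁ = σ₂ := Equiv.ext fun i => h₁.injective (congrFun heq i)
    rfl
  · intro r hr
    rw [mem_filter_univ] at hr
    set σ := Tuple.sort (OrderDual.toDual ∘ r)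
    refine ⟨(r ∘ σ, σ⁻¹), ?_, by ext i; simp⟩
    simp only [mem_product, mem_filter_univ, mem_univ, and_true]
    exact (Tuple.monotone_sort (OrderDual.toDual ∘ r)).strictMono_of_injective
      (hr.comp σ.injective)

open Classical in
theorem sum_antitone_eq_sum_strictAnti {Mn : ℕ} (lam : Fin N → ℕ)
    (hMn : ∀ i, lam i + (N - 1 - i) < Mn) (f : (Fin N → ℕ) → M) :
    ∑ m ∈ univ.filter (fun m : (i : Fin N) → Fin (lam i + 1) =>
        ∀ i j : Fin N, i ≤ j → (m j : ℕ) ≤ m i), f (fun i => m i + (N - 1 - i)) =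
      ∑ g ∈ univ.filter (fun g : Fin N → Fin Mn =>
        StrictAnti g ∧ ∀ i, g i ≤ ⟨lam i + (N - 1 - i), hMn i⟩), f (fun i => g i) := by
  refine sum_bij' (fun m _ i => ⟨m i + (N - 1 - i), (hMn i).trans_le' (by omega)⟩)
    (fun g hg i => ⟨g i + i - (N - 1), by
      have : (g i : ℕ) ≤ lam i + (N - 1 - i) := (mem_filter.mp hg).2.2 i
      omega⟩)
    ?_ ?_ ?_ ?_ fun _ _ => rfl
  · intro m hm
    simp only [mem_filter_univ] at hm ⊢
    refine ⟨Fin.strictAnti_iff_antitone_add_val.mpr fun i j hij => ?_, fun i => ?_⟩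
    · have := hm i j hij
      simp only
      omega
    · exact Fin.mk_le_mk.mpr (by omega)
  · intro g hg
    simp only [mem_filter_univ] at hg ⊢
    intro i j hij
    have := Fin.strictAnti_iff_antitone_add_val.mp hg.1 hij
    simp only at this ⊢
    omega
  · intro m _
    ext i
    simp only
    omega
  · intro g hg
    ext i
    have := Fin.sub_le_of_antitone_add_val (Fin.strictAnti_iff_antitone_add_val.mp
      (mem_filter.mp hg).2.1) i
    simp only
    omega

end Finset

namespace Matrix

variable {R ι : Type*} [CommRing R] {N : ℕ}

theorem det_eq_zero_of_block_eq_zero {n : Type*} [Fintype n] [DecidableEq n] (A : Matrix n n R)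
    (s t : Finset n) (hcard : Fintype.card n < #s + #t) (hA : ∀ i ∈ s, ∀ j ∈ t, A i j = 0) :
    A.det = 0 := by
  rw [det_apply]
  refine sum_eq_zero fun σ _ => ?_
  obtain ⟨j, hj, hσj⟩ : ∃ j ∈ t, σ j ∈ s := by
    by_contra! h
    have := card_le_card_of_injOn σ (fun j hj => mem_compl.mpr (h j hj)) σ.injective.injOn
    rw [card_compl] at this
    have := card_le_univ s
    omega
  rw [prod_eq_zero (f := fun i => A (σ i) i) (mem_univ j) (hA _ hσj j hj), smul_zero]

theorem det_submatrix_eq_zero_of_lt [LinearOrder ι] (A : Matrix (Fin N) ι R) {L g : Fin N → ι}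
    (hL : Antitone L) (hA : ∀ i k, L i < k → A i k = 0) (hg : Antitone g) {t : Fin N}
    (ht : L t < g t) : (A.submatrix id g).det = 0 :=
  det_eq_zero_of_block_eq_zero _ (Ici t) (Iic t) (by simp; omega)
    fun i hi j hj => hA _ _ ((hL (mem_Ici.mp hi)).trans_lt (ht.trans_le (hg (mem_Iic.mp hj))))

variable [Fintype ι]

theorem det_mul_eq_sum_det_submatrix_mul_prod (A : Matrix (Fin N) ι R) (B : Matrix ι (Fin N) R) :
    (A * B).det = ∑ r : Fin N → ι, (A.submatrix id r).det * ∏ i, B (r i) i := by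
  simp only [det_apply', mul_apply, prod_univ_sum, mul_sum, Fintype.piFinset_univ, sum_mul,
    submatrix_apply, id, prod_mul_distrib, mul_assoc]
  exact sum_comm

variable [LinearOrder ι]

open Classical in
theorem det_mul_eq_sum_strictAnti (A : Matrix (Fin N) ι R) (B : Matrix ι (Fin N) R) :
    (A * B).det = ∑ g : Fin N → ι with StrictAnti g,
      (A.submatrix id g).det * (B.submatrix g id).det := by
  calc (A * B).det
      = ∑ r : Fin N → ι with Function.Injective r, (A.submatrix id r).det * ∏ i, B (r i) i := by
        rw [det_mul_eq_sum_det_submatrix_mul_prod, sum_filter_of_ne]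
        intro r _ hr
        contrapose! hr
        obtain ⟨i, j, hij, hne⟩ : ∃ i j, r i = r j ∧ i ≠ j := by
          simpa [Function.Injective] using hr
        rw [det_zero_of_column_eq hne fun k => by simp [hij], zero_mul]
    _ = _ := by
        rw [sum_injective_eq_sum_strictAnti_sum_perm]
        refine sum_congr rfl fun g _ => ?_
        simp only [det_apply' (B.submatrix g id), mul_sum]
        refine sum_congr rfl fun σ _ => ?_
        rw [show A.submatrix id (g ∘ σ) = (A.submatrix id g).submatrix id σ from rfl,
          det_permute']
        simp only [submatrix_apply, id, Function.comp]
        ring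

open Classical in
theorem det_mul_eq_sum_strictAnti_le (A : Matrix (Fin N) ι R) (B : Matrix ι (Fin N) R)
    {L : Fin N → ι} (hL : Antitone L) (hA : ∀ i k, L i < k → A i k = 0) :
    (A * B).det = ∑ g ∈ univ.filter (fun g : Fin N → ι => StrictAnti g ∧ ∀ i, g i ≤ L i),
      (A.submatrix id g).det * (B.submatrix g id).det := by
  rw [det_mul_eq_sum_strictAnti, ← filter_filter,
    sum_filter_of_ne (s := univ.filter StrictAnti) fun g hg hne => ?_]
  by_contra! ⟨t, ht⟩
  exact hne <| by
    rw [det_submatrix_eq_zero_of_lt A hL hA (mem_filter.mp hg).2.antitone ht, zero_mul]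

end Matrix

theorem Nat.ite_choose_toNat_mul_eq {R : Type*} [Semiring R] (q : ℕ → R) {n k : ℕ} {z : ℤ}
    (hz : z = n - k) :
    (if z < 0 then 0 else (n.choose z.toNat : R) * q z.toNat) = n.choose k * q (n - k) := by
  split_ifs with hneg
  · rw [Nat.choose_eq_zero_of_lt (by omega), Nat.cast_zero, zero_mul]
  · obtain ⟨hk, hzn⟩ : k ≤ n ∧ z.toNat = n - k := by omega
    rw [hzn, Nat.choose_symm hk]

theorem Polynomial.eval_add_eq_sum_fin_of_binomial {F : Type*} [CommSemiring F]
    {p : ℕ → Polynomial F} (hbin : ∀ (n : ℕ) (a b : F), (p n).eval (a + b) =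
      ∑ j ∈ Finset.range (n + 1), (n.choose j : F) * (p j).eval a * (p (n - j)).eval b)
    {n M : ℕ} (hn : n < M) (a b : F) :
    (p n).eval (a + b) = ∑ k : Fin M, (n.choose k : F) * (p (n - k)).eval b * (p k).eval a := by
  rw [hbin,
    Fin.sum_univ_eq_sum_range (fun k => (n.choose k : F) * (p (n - k)).eval b * (p k).eval a),
    ← sum_subset (range_subset_range.mpr hn) fun k _ hk => ?_]
  · exact sum_congr rfl fun k _ => by ring
  · rw [Nat.choose_eq_zero_of_lt (by simpa using hk), Nat.cast_zero, zero_mul, zero_mul]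

theorem expansion_of_s_general {F : Type*} [Field F] (N : ℕ) (p : ℕ → Polynomial F)
    (hbin : ∀ (n : ℕ) (a b : F), (p n).eval (a + b) =
      ∑ j ∈ Finset.range (n + 1), (n.choose j : F) * (p j).eval a * (p (n - j)).eval b)
    (lam : Fin N → ℕ) (hanti : ∀ i j : Fin N, i ≤ j → lam j ≤ lam i)
    (x : Fin N → F) (u : F) :
    (Matrix.of fun i j : Fin N => (p (lam i + (N - 1 - (i : ℕ)))).eval (x j + u)).det =
      ∑ m ∈ Finset.univ.filter
          (fun m : (i : Fin N) → Fin (lam i + 1) =>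
            ∀ i j : Fin N, i ≤ j → ((m j : ℕ) ≤ (m i : ℕ))),
        (Matrix.of fun i j : Fin N =>
          if ((lam i : ℤ) - ((m j : ℕ) : ℤ) - (i : ℕ) + (j : ℕ)) < 0 then 0
          else ((lam i + (N - 1 - (i : ℕ))).choose
                  ((lam i : ℤ) - ((m j : ℕ) : ℤ) - (i : ℕ) + (j : ℕ)).toNat : F) *
            (p ((lam i : ℤ) - ((m j : ℕ) : ℤ) - (i : ℕ) + (j : ℕ)).toNat).eval u).det *
        (Matrix.of fun i j : Fin N => (p ((m i : ℕ) + (N - 1 - (i : ℕ)))).eval (x j)).det := by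
  classical
  obtain ⟨Mn, hMn⟩ : ∃ Mn, ∀ i : Fin N, lam i + (N - 1 - i) < Mn :=
    ⟨univ.sup (fun i : Fin N => lam i + (N - 1 - i)) + 1, fun i => Nat.lt_succ_of_le
      (le_sup (f := fun i : Fin N => lam i + (N - 1 - i)) (mem_univ i))⟩
  let L : Fin N → Fin Mn := fun i => ⟨lam i + (N - 1 - i), hMn i⟩
  let D : Matrix (Fin N) (Fin Mn) F :=
    .of fun i k => ((L i : ℕ).choose k : F) * (p (L i - k)).eval u
  let P : Matrix (Fin Mn) (Fin N) F := .of fun k j => (p k).eval (x j)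
  have hL : Antitone L := fun i j hij => by
    have := hanti i j hij
    exact Fin.mk_le_mk.mpr (by omega)
  calc _ = (D * P).det := by
        congr 1; ext i j; exact Polynomial.eval_add_eq_sum_fin_of_binomial hbin (hMn i) _ _
    _ = _ := Matrix.det_mul_eq_sum_strictAnti_le D P hL fun i k hk => by
        simp [D, Nat.choose_eq_zero_of_lt (show (L i : ℕ) < k from hk)]
    _ = _ := (sum_antitone_eq_sum_strictAnti lam hMn fun g =>
          (Matrix.of fun i j => ((L i : ℕ).choose (g j) : F) * (p (L i - g j)).eval u).det *
            (Matrix.of fun i j => (p (g i)).eval (x j)).det).symm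
    _ = _ := sum_congr rfl fun m _ => by
        congr 2
        ext i j
        refine (Nat.ite_choose_toNat_mul_eq (fun k => (p k).eval u) ?_).symm
        have := i.isLt
        have := j.isLt
        simp only [L]
        omega

/-- Expansion of the Schur-type determinant for a monic binomial-type sequence:
`s̃_λ(x₁+u, …, x_N+u) = ∑_{μ ⊆ λ} d_{λμ}(u) s̃_μ(x₁,…,x_N)`, where `μ` runs over partitions
with `μᵢ ≤ λᵢ` (encoded as antitone elements of `Π i, Fin (λᵢ + 1)`) and
`d_{λμ}(u) = det( C(λᵢ+N-i, λᵢ-μⱼ-i+j) p_{λᵢ-μⱼ-i+j}(u) )`, with the conventions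
`C(m,r) = 0` and `p_r = 0` for `r < 0`. -/
theorem expansion_of_s {F : Type*} [Field F] [CharZero F] (N : ℕ) (p : ℕ → Polynomial F)
    (hmonic : ∀ n, (p n).Monic) (hdeg : ∀ n, (p n).natDegree = n)
    (hbin : ∀ (n : ℕ) (a b : F), (p n).eval (a + b) =
      ∑ j ∈ Finset.range (n + 1), (n.choose j : F) * (p j).eval a * (p (n - j)).eval b)
    (h0 : ∀ n : ℕ, (p n).eval 0 = if n = 0 then 1 else 0)
    (lam : Fin N → ℕ) (hanti : ∀ i j : Fin N, i ≤ j → lam j ≤ lam i)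
    (x : Fin N → F) (u : F) :
    (Matrix.of fun i j : Fin N => (p (lam i + (N - 1 - (i : ℕ)))).eval (x j + u)).det =
      ∑ m ∈ Finset.univ.filter
          (fun m : (i : Fin N) → Fin (lam i + 1) =>
            ∀ i j : Fin N, i ≤ j → ((m j : ℕ) ≤ (m i : ℕ))),
        (Matrix.of fun i j : Fin N =>
          if ((lam i : ℤ) - ((m j : ℕ) : ℤ) - (i : ℕ) + (j : ℕ)) < 0 then 0
          else ((lam i + (N - 1 - (i : ℕ))).choose
                  ((lam i : ℤ) - ((m j : ℕ) : ℤ) - (i : ℕ) + (j : ℕ)).toNat : F) *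
            (p ((lam i : ℤ) - ((m j : ℕ) : ℤ) - (i : ℕ) + (j : ℕ)).toNat).eval u).det *
        (Matrix.of fun i j : Fin N => (p ((m i : ℕ) + (N - 1 - (i : ℕ)))).eval (x j)).det :=
  expansion_of_s_general N p hbin lam hanti x u
end
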